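/- arXiv:math/0511129 — 5 statements merged into one kernel-verified Lean document; each statement's English description precedes it below -/
import Mathlib

section
/- Let (R, e, *, d, c) be a nontrivial amorphic C-algebra and let g : R → R be a bijection with g(e) = e. Then g is an automorphism of the C-algebra, i.e. c_{g(r),g(s)}^{g(t)} = c_{r,s}^t for all r, s, t ∈ R, if and only if d_{g(r)} = d_r for all r ∈ R. -/
open Finset

/-- Data of a `C`-algebra: a unit `e`, an involution `inv` (written `*` in the paper),
degrees `d`, and structure constants `c`. -/
structure CAlgebraData (R : Type*) where
  e : R
  inv : R → R
  d : R → ℝ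
  c : R → R → R → ℝ

/-- The axioms of a `C`-algebra. -/
def IsCAlgebra {R : Type*} [Fintype R] [DecidableEq R] (A : CAlgebraData R) : Prop :=
  A.inv A.e = A.e ∧
  (∀ r, A.inv (A.inv r) = r) ∧
  (∀ r, 0 < A.d r) ∧
  (∀ s t, A.c A.e s t = if s = t then 1 else 0) ∧
  (∀ r t, A.c r A.e t = if r = t then 1 else 0) ∧
  (∀ r s t u, ∑ v, A.c r s v * A.c v t u = ∑ v, A.c r v u * A.c s t v) ∧
  (∀ r s t, A.c r s t = A.c (A.inv s) (A.inv r) (A.inv t)) ∧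
  (∀ r s, A.c r s A.e = if s = A.inv r then A.d r else 0) ∧
  A.d A.e = 1 ∧
  (∀ r, A.d (A.inv r) = A.d r) ∧
  (∀ r s, ∑ t, A.d t * A.c r s t = A.d r * A.d s)

/-- `π` is a partition of the (finite) type `R` into nonempty classes. -/
def IsPartition {R : Type*} [Fintype R] (π : Finset (Finset R)) : Prop :=
  (∀ S ∈ π, S.Nonempty) ∧ ∀ r : R, ∃! S, S ∈ π ∧ r ∈ S

/-- A `C`-algebra is amorphic if every partition of `R` containing `{e}` as a class
gives rise to a fusion `C`-algebra. -/
def IsAmorphic {R : Type*} [Fintype R] [DecidableEq R] (A : CAlgebraData R) : Prop :=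
  ∀ π : Finset (Finset R), IsPartition π → ({A.e} : Finset R) ∈ π →
    (∀ S ∈ π, S.image A.inv ∈ π) ∧
    ∀ S ∈ π, ∀ T ∈ π, ∀ U ∈ π, ∀ u ∈ U, ∀ v ∈ U,
      ∑ r ∈ S, ∑ s ∈ T, A.c r s u = ∑ r ∈ S, ∑ s ∈ T, A.c r s v

/-- The degree `n` of a `C`-algebra. -/
noncomputable def CAlgebraData.degree {R : Type*} [Fintype R] (A : CAlgebraData R) : ℝ :=
  ∑ r, A.d r

/-- `ε ∈ {-1, 1}` is the sign of a (nontrivial amorphic) `C`-algebra. -/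
def IsSign {R : Type*} [Fintype R] (A : CAlgebraData R) (ε : ℝ) : Prop :=
  (ε = -1 ∨ ε = 1) ∧ 0 < Real.sqrt A.degree + ε ∧
    ∀ r s t, r ≠ A.e → s ≠ A.e → t ≠ A.e → r ≠ s → s ≠ t → r ≠ t →
      A.c r s t = A.d r * A.d s / (Real.sqrt A.degree + ε) ^ 2

section Aux
variable {R : Type*} [Fintype R] [DecidableEq R]

lemma partAux (B : Finset R) (hB : Bᶜ.Nonempty) :
    IsPartition (insert Bᶜ (B.image fun x => ({x} : Finset R))) := by
  constructor
  · intro S hS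
    rcases Finset.mem_insert.1 hS with h | h
    · exact h ▸ hB
    · obtain ⟨x, _, rfl⟩ := Finset.mem_image.1 h
      exact ⟨x, Finset.mem_singleton_self x⟩
  · intro r
    by_cases hr : r ∈ B
    · refine ⟨{r}, ⟨Finset.mem_insert_of_mem (Finset.mem_image_of_mem _ hr),
        Finset.mem_singleton_self r⟩, ?_⟩
      rintro S ⟨hS, hrS⟩
      rcases Finset.mem_insert.1 hS with h | h
      · subst h
        exact absurd (Finset.mem_compl.1 hrS) (by simp [hr])
      · obtain ⟨x, _, rfl⟩ := Finset.mem_image.1 h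
        have := Finset.mem_singleton.1 hrS
        subst this; rfl
    · refine ⟨Bᶜ, ⟨Finset.mem_insert_self _ _, Finset.mem_compl.2 hr⟩, ?_⟩
      rintro S ⟨hS, hrS⟩
      rcases Finset.mem_insert.1 hS with h | h
      · exact h
      · obtain ⟨x, hx, rfl⟩ := Finset.mem_image.1 h
        exact absurd ((Finset.mem_singleton.1 hrS) ▸ hx) hr

lemma complNe (hnt : 4 ≤ Fintype.card R) (B : Finset R) (hB : B.card ≤ 3) :
    Bᶜ.Nonempty := by
  rw [← Finset.card_pos, Finset.card_compl]
  omega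

lemma card3 (a b c : R) : ({a, b, c} : Finset R).card ≤ 3 := by
  refine (Finset.card_insert_le _ _).trans (Nat.succ_le_succ ?_)
  refine (Finset.card_insert_le _ _).trans (Nat.succ_le_succ ?_)
  simp

lemma card2 (a b : R) : ({a, b} : Finset R).card ≤ 3 := by
  refine le_trans ?_ (by norm_num : (2:ℕ) ≤ 3)
  refine (Finset.card_insert_le _ _).trans (Nat.succ_le_succ ?_)
  simp

end Aux

set_option linter.unusedSectionVars false

section Aux2
variable {R : Type*} [Fintype R] [DecidableEq R]

lemma inv_id (A : CAlgebraData R) (hA : IsCAlgebra A) (hnt : 4 ≤ Fintype.card R)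
    (ham : IsAmorphic A) : ∀ r, A.inv r = r := by
  obtain ⟨h1, h2, h3, h4, h5, h6, h7, h8, h9, h10, h11⟩ := hA
  intro r
  by_cases hre : r = A.e
  · rw [hre, h1]
  · have hne : (({A.e, r} : Finset R))ᶜ.Nonempty := complNe hnt _ (card2 _ _)
    have hpart := partAux _ hne
    have hE : ({A.e} : Finset R) ∈ insert ({A.e, r} : Finset R)ᶜ
        (({A.e, r} : Finset R).image fun x => ({x} : Finset R)) :=
      Finset.mem_insert_of_mem (Finset.mem_image_of_mem _ (by simp))
    have hi := (ham _ hpart hE).1 {r}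
      (Finset.mem_insert_of_mem (Finset.mem_image_of_mem _ (by simp)))
    rw [Finset.image_singleton] at hi
    rcases Finset.mem_insert.1 hi with h | h
    · exfalso
      have hc1 : (({A.e, r} : Finset R))ᶜ.card = 1 := by rw [← h]; simp
      have hc2 : ({A.e, r} : Finset R).card ≤ 2 := by
        refine (Finset.card_insert_le _ _).trans (Nat.succ_le_succ ?_); simp
      have := Finset.card_compl ({A.e, r} : Finset R)
      omega
    · obtain ⟨x, hx, hxx⟩ := Finset.mem_image.1 h
      have hx2 : x = A.inv r := Finset.singleton_injective hxx
      rcases Finset.mem_insert.1 hx with h | h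
      · exfalso; apply hre
        have : A.inv r = A.e := by rw [← hx2, h]
        rw [← h2 r, this, h1]
      · rw [← hx2, Finset.mem_singleton.1 h]

lemma ccomm (A : CAlgebraData R) (hA : IsCAlgebra A) (hnt : 4 ≤ Fintype.card R)
    (ham : IsAmorphic A) : ∀ r s t, A.c r s t = A.c s r t := by
  intro r s t
  have h7 := hA.2.2.2.2.2.2.1
  rw [h7 r s t, inv_id A hA hnt ham, inv_id A hA hnt ham, inv_id A hA hnt ham]

lemma cstar (A : CAlgebraData R) (hA : IsCAlgebra A) (hnt : 4 ≤ Fintype.card R)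
    (ham : IsAmorphic A) : ∀ r s t, A.d t * A.c r s t = A.d r * A.c s t r := by
  intro r s t
  obtain ⟨h1, h2, h3, h4, h5, h6, h7, h8, h9, h10, h11⟩ := hA
  have hid := inv_id A ⟨h1, h2, h3, h4, h5, h6, h7, h8, h9, h10, h11⟩ hnt ham
  have H := h6 r s t A.e
  have hL : ∑ v, A.c r s v * A.c v t A.e = A.c r s t * A.d t := by
    rw [Finset.sum_eq_single t]
    · rw [h8, hid]; simp
    · intro v _ hv
      rw [h8, hid, if_neg (by exact fun hh => hv hh.symm), mul_zero]
    · intro h; exact absurd (Finset.mem_univ t) h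
  have hR : ∑ v, A.c r v A.e * A.c s t v = A.d r * A.c s t r := by
    rw [Finset.sum_eq_single r]
    · rw [h8, hid, if_pos rfl]
    · intro v _ hv
      rw [h8, hid, if_neg hv, zero_mul]
    · intro h; exact absurd (Finset.mem_univ r) h
  rw [hL] at H
  rw [hR] at H
  rw [← H, mul_comm]

end Aux2
section Aux3
variable {R : Type*} [Fintype R] [DecidableEq R]

open scoped Classical in
/-- a witness distinct from `e`, `r`, `s`. -/
noncomputable def wp (A : CAlgebraData R) (r s : R) : R :=
  if h : ∃ t : R, t ≠ A.e ∧ t ≠ r ∧ t ≠ s then h.choose else A.e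

lemma wp_spec (A : CAlgebraData R) (hnt : 4 ≤ Fintype.card R) (r s : R) :
    wp A r s ≠ A.e ∧ wp A r s ≠ r ∧ wp A r s ≠ s := by
  have hex : ∃ t : R, t ≠ A.e ∧ t ≠ r ∧ t ≠ s := by
    obtain ⟨t, ht⟩ := complNe hnt ({A.e, r, s} : Finset R) (card3 _ _ _)
    have := Finset.mem_compl.1 ht
    simp only [Finset.mem_insert, Finset.mem_singleton, not_or] at this
    exact ⟨t, this.1, this.2.1, this.2.2⟩
  rw [wp, dif_pos hex]
  exact hex.choose_spec

/-- the generic structure constant -/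
noncomputable def Kf (A : CAlgebraData R) (r s : R) : ℝ := A.c r s (wp A r s)

noncomputable def kf (A : CAlgebraData R) (r : R) : ℝ := Kf A r r / A.d r

noncomputable def af (A : CAlgebraData R) (s : R) : ℝ :=
  A.d s * kf A (wp A A.e s) - Kf A (wp A A.e s) s

/-- step 4: c r s t is constant for t outside {e, r, s} -/
lemma cconst (A : CAlgebraData R) (hA : IsCAlgebra A) (hnt : 4 ≤ Fintype.card R)
    (ham : IsAmorphic A) (r s t u : R) (hr : r ≠ A.e) (hs : s ≠ A.e)
    (ht : t ∉ ({A.e, r, s} : Finset R)) (hu : u ∉ ({A.e, r, s} : Finset R)) :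
    A.c r s t = A.c r s u := by
  have hne : (({A.e, r, s} : Finset R))ᶜ.Nonempty := complNe hnt _ (card3 _ _ _)
  have hpart := partAux _ hne
  have hE : ({A.e} : Finset R) ∈ insert ({A.e, r, s} : Finset R)ᶜ
      (({A.e, r, s} : Finset R).image fun x => ({x} : Finset R)) :=
    Finset.mem_insert_of_mem (Finset.mem_image_of_mem _ (by simp))
  have h2 := (ham _ hpart hE).2 {r}
    (Finset.mem_insert_of_mem (Finset.mem_image_of_mem _ (by simp))) {s}
    (Finset.mem_insert_of_mem (Finset.mem_image_of_mem _ (by simp)))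
    (({A.e, r, s} : Finset R))ᶜ (Finset.mem_insert_self _ _)
    t (Finset.mem_compl.2 ht) u (Finset.mem_compl.2 hu)
  simpa using h2

lemma cconstK (A : CAlgebraData R) (hA : IsCAlgebra A) (hnt : 4 ≤ Fintype.card R)
    (ham : IsAmorphic A) (r s t : R) (hr : r ≠ A.e) (hs : s ≠ A.e)
    (hte : t ≠ A.e) (htr : t ≠ r) (hts : t ≠ s) :
    A.c r s t = Kf A r s := by
  obtain ⟨w1, w2, w3⟩ := wp_spec A hnt r s
  exact cconst A hA hnt ham r s t (wp A r s) hr hs (by simp [hte, htr, hts])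
    (by simp [w1, w2, w3])

lemma Ksymm (A : CAlgebraData R) (hA : IsCAlgebra A) (hnt : 4 ≤ Fintype.card R)
    (ham : IsAmorphic A) (r s : R) (hr : r ≠ A.e) (hs : s ≠ A.e) :
    Kf A r s = Kf A s r := by
  obtain ⟨w1, w2, w3⟩ := wp_spec A hnt s r
  rw [show Kf A s r = A.c s r (wp A s r) from rfl, ← ccomm A hA hnt ham,
    cconstK A hA hnt ham r s _ hr hs w1 w3 w2]

lemma Krr (A : CAlgebraData R) (hA : IsCAlgebra A) (r : R) :
    Kf A r r = A.d r * kf A r := by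
  have h3 := hA.2.2.1
  rw [kf, mul_div_cancel₀ _ (ne_of_gt (h3 r))]

/-- step 6: c r s r = d s * kf r -/
lemma crsr (A : CAlgebraData R) (hA : IsCAlgebra A) (hnt : 4 ≤ Fintype.card R)
    (ham : IsAmorphic A) (r s : R) (hr : r ≠ A.e) (hs : s ≠ A.e) (hrs : r ≠ s) :
    A.c r s r = A.d s * kf A r := by
  have h3 := hA.2.2.1
  have e2 : A.c r s r = A.c s r r :=
    mul_left_cancel₀ (ne_of_gt (h3 r)) (cstar A hA hnt ham r s r)
  have e3 : A.d r * A.c s r r = A.d s * A.c r r s := cstar A hA hnt ham s r r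
  have e4 : A.c r r s = Kf A r r := cconstK A hA hnt ham r r s hr hr hs
    (fun h => hrs h.symm) (fun h => hrs h.symm)
  rw [e2]
  have := Krr A hA r
  apply mul_left_cancel₀ (ne_of_gt (h3 r))
  rw [e3, e4, this]; ring

end Aux3
section Aux4
variable {R : Type*} [Fintype R] [DecidableEq R]

lemma sum_split (A : CAlgebraData R) (B : Finset R) (f : R → ℝ) :
    ∑ t ∈ Bᶜ, f t = (∑ t, f t) - ∑ t ∈ B, f t := by
  have := Finset.sum_add_sum_compl B f
  linarith

lemma sumpos (A : CAlgebraData R) (hA : IsCAlgebra A) (hnt : 4 ≤ Fintype.card R)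
    (x : R) (hx : x ≠ A.e) : 0 < (∑ t, A.d t) - 1 - A.d x := by
  obtain ⟨h1, h2, h3, h4, h5, h6, h7, h8, h9, h10, h11⟩ := hA
  have hsum : ∑ t ∈ ({A.e, x} : Finset R), A.d t = 1 + A.d x := by
    rw [Finset.sum_insert (by simp [Ne.symm hx]), Finset.sum_singleton, h9]
  have hsplit := sum_split A ({A.e, x} : Finset R) A.d
  rw [hsum] at hsplit
  have hpos : 0 < ∑ t ∈ ({A.e, x} : Finset R)ᶜ, A.d t := by
    apply Finset.sum_pos (fun i _ => h3 i)
    exact complNe hnt _ (card2 _ _)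
  linarith

lemma eqA (A : CAlgebraData R) (hA : IsCAlgebra A) (hnt : 4 ≤ Fintype.card R)
    (ham : IsAmorphic A) (r s : R) (hr : r ≠ A.e) (hs : s ≠ A.e) (hrs : r ≠ s) :
    A.d s * Kf A r r + A.d r * Kf A s s
      + ((∑ t, A.d t) - 1 - A.d r - A.d s) * Kf A r s = A.d r * A.d s := by
  obtain ⟨h1, h2, h3, h4, h5, h6, h7, h8, h9, h10, h11⟩ := hA
  have hA' : IsCAlgebra A := ⟨h1, h2, h3, h4, h5, h6, h7, h8, h9, h10, h11⟩
  have hid := inv_id A hA' hnt ham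
  set B : Finset R := {A.e, r, s} with hB
  have heB : A.e ∉ ({r, s} : Finset R) := by simp [Ne.symm hr, Ne.symm hs]
  have hrB : r ∉ ({s} : Finset R) := by simp [hrs]
  have hsum1 : ∑ t ∈ B, A.d t * A.c r s t
      = A.d r * A.c r s r + A.d s * A.c r s s := by
    rw [hB, Finset.sum_insert heB, Finset.sum_insert hrB, Finset.sum_singleton,
      h8, hid, if_neg (fun h => hrs h.symm)]
    ring
  have hcc : A.c r s r = A.d s * kf A r := crsr A hA' hnt ham r s hr hs hrs
  have hcc2 : A.c r s s = A.d r * kf A s := by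
    rw [ccomm A hA' hnt ham, crsr A hA' hnt ham s r hs hr (Ne.symm hrs)]
  have hsum2 : ∑ t ∈ Bᶜ, A.d t * A.c r s t = (∑ t ∈ Bᶜ, A.d t) * Kf A r s := by
    rw [Finset.sum_mul]
    apply Finset.sum_congr rfl
    intro t ht
    have ht' := Finset.mem_compl.1 ht
    rw [hB] at ht'
    simp only [Finset.mem_insert, Finset.mem_singleton, not_or] at ht'
    rw [cconstK A hA' hnt ham r s t hr hs ht'.1 ht'.2.1 ht'.2.2]
  have hdB : ∑ t ∈ B, A.d t = 1 + A.d r + A.d s := by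
    rw [hB, Finset.sum_insert heB, Finset.sum_insert hrB, Finset.sum_singleton, h9]
    ring
  have hsplit := sum_split A B (fun t => A.d t * A.c r s t)
  have hsplitd := sum_split A B A.d
  rw [hdB] at hsplitd
  have key : (∑ t : R, A.d t - (1 + A.d r + A.d s)) * Kf A r s
      = A.d r * A.d s - (A.d r * (A.d s * kf A r) + A.d s * (A.d r * kf A s)) := by
    rw [← hsplitd, ← hsum2, hsplit, hsum1, h11 r s, hcc, hcc2]
  rw [Krr A hA' r, Krr A hA' s]
  linear_combination key
end Aux4
section Aux5
variable {R : Type*} [Fintype R] [DecidableEq R]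

lemma eqB (A : CAlgebraData R) (hA : IsCAlgebra A) (hnt : 4 ≤ Fintype.card R)
    (ham : IsAmorphic A) (r : R) (hr : r ≠ A.e) :
    A.d r + A.d r * A.c r r r + ((∑ t, A.d t) - 1 - A.d r) * Kf A r r
      = A.d r * A.d r := by
  obtain ⟨h1, h2, h3, h4, h5, h6, h7, h8, h9, h10, h11⟩ := hA
  have hA' : IsCAlgebra A := ⟨h1, h2, h3, h4, h5, h6, h7, h8, h9, h10, h11⟩
  have hid := inv_id A hA' hnt ham
  set B : Finset R := {A.e, r} with hB
  have heB : A.e ∉ ({r} : Finset R) := by simp [Ne.symm hr]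
  have hsum1 : ∑ t ∈ B, A.d t * A.c r r t = A.d r + A.d r * A.c r r r := by
    rw [hB, Finset.sum_insert heB, Finset.sum_singleton, h8, hid, if_pos rfl, h9]
    ring
  have hsum2 : ∑ t ∈ Bᶜ, A.d t * A.c r r t = (∑ t ∈ Bᶜ, A.d t) * Kf A r r := by
    rw [Finset.sum_mul]
    apply Finset.sum_congr rfl
    intro t ht
    have ht' := Finset.mem_compl.1 ht
    rw [hB] at ht'
    simp only [Finset.mem_insert, Finset.mem_singleton, not_or] at ht'
    rw [cconstK A hA' hnt ham r r t hr hr ht'.1 ht'.2 ht'.2]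
  have hdB : ∑ t ∈ B, A.d t = 1 + A.d r := by
    rw [hB, Finset.sum_insert heB, Finset.sum_singleton, h9]
  have hsplit := sum_split A B (fun t => A.d t * A.c r r t)
  have hsplitd := sum_split A B A.d
  rw [hdB] at hsplitd
  have key : (∑ t : R, A.d t - (1 + A.d r)) * Kf A r r
      = A.d r * A.d r - (A.d r + A.d r * A.c r r r) := by
    rw [← hsplitd, ← hsum2, hsplit, hsum1, h11 r r]
  linear_combination key

lemma memCompl2 {a b x : R} (hx : x ∈ ({a, b} : Finset R)ᶜ) : x ≠ a ∧ x ≠ b := by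
  have := Finset.mem_compl.1 hx
  simp only [Finset.mem_insert, Finset.mem_singleton, not_or] at this
  exact this

/-- step 8 + definition of af: d s * kf p - Kf p s = af s -/
lemma Salpha (A : CAlgebraData R) (hA : IsCAlgebra A) (hnt : 4 ≤ Fintype.card R)
    (ham : IsAmorphic A) (p s : R) (hp : p ≠ A.e) (hs : s ≠ A.e) (hps : p ≠ s) :
    A.d s * kf A p - Kf A p s = af A s := by
  obtain ⟨hu1, hu2, hu3⟩ := wp_spec A hnt A.e s
  set u : R := wp A A.e s with hudef
  have hES : ({A.e} : Finset R) ∈ insert ({A.e, s} : Finset R)ᶜ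
      (({A.e, s} : Finset R).image fun x => ({x} : Finset R)) :=
    Finset.mem_insert_of_mem (Finset.mem_image_of_mem _ (by simp))
  have hSs : ({s} : Finset R) ∈ insert ({A.e, s} : Finset R)ᶜ
      (({A.e, s} : Finset R).image fun x => ({x} : Finset R)) :=
    Finset.mem_insert_of_mem (Finset.mem_image_of_mem _ (by simp))
  have hCmem : (({A.e, s} : Finset R))ᶜ ∈ insert ({A.e, s} : Finset R)ᶜ
      (({A.e, s} : Finset R).image fun x => ({x} : Finset R)) :=
    Finset.mem_insert_self _ _
  have hne : (({A.e, s} : Finset R))ᶜ.Nonempty := complNe hnt _ (card2 _ _)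
  have hpart := partAux _ hne
  have hpC : p ∈ (({A.e, s} : Finset R))ᶜ := by
    rw [Finset.mem_compl]; simp [hp, hps]
  have huC : u ∈ (({A.e, s} : Finset R))ᶜ := by
    rw [Finset.mem_compl]; simp [hu1, hu3]
  have H := (ham _ hpart hES).2 _ hCmem _ hSs _ hCmem p hpC u huC
  simp only [Finset.sum_singleton] at H
  have gen : ∀ q, q ∈ (({A.e, s} : Finset R))ᶜ →
      ∑ x ∈ ({A.e, s} : Finset R)ᶜ, (A.c x s q - Kf A x s)
        = A.c q s q - Kf A q s := by
    intro q hq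
    apply Finset.sum_eq_single_of_mem q hq
    intro x hx hxq
    obtain ⟨hx1, hx2⟩ := memCompl2 hx
    obtain ⟨hq1, hq2⟩ := memCompl2 hq
    rw [cconstK A hA hnt ham x s q hx1 hs hq1 (fun hh => hxq hh.symm) hq2]
    ring
  have Hp := gen p hpC
  have Hu := gen u huC
  rw [Finset.sum_sub_distrib] at Hp Hu
  rw [H] at Hp
  have key : A.c p s p - Kf A p s = A.c u s u - Kf A u s := by linarith
  rw [crsr A hA hnt ham p s hp hs hps, crsr A hA hnt ham u s hu1 hs hu3] at key
  rw [af, ← hudef]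
  linarith

lemma kinv (A : CAlgebraData R) (hA : IsCAlgebra A) (hnt : 4 ≤ Fintype.card R)
    (ham : IsAmorphic A) (r r' : R) (hr : r ≠ A.e) (hr' : r' ≠ A.e)
    (hd : A.d r = A.d r') : kf A r = kf A r' := by
  by_cases hrr : r = r'
  · rw [hrr]
  · have h3 := hA.2.2.1
    obtain ⟨hx1, hx2, hx3⟩ := wp_spec A hnt r r'
    set x : R := wp A r r' with hxdef
    have E : ∀ p, p ≠ A.e → p ≠ x →
        A.d x * (A.d p * kf A p) + A.d p * Kf A x x
          + ((∑ t, A.d t) - 1 - A.d p - A.d x) * (A.d x * kf A p - af A x)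
          = A.d p * A.d x := by
      intro p hp hpx
      have := eqA A hA hnt ham p x hp hx1 hpx
      rw [Krr A hA p] at this
      have hS := Salpha A hA hnt ham p x hp hx1 hpx
      have : Kf A p x = A.d x * kf A p - af A x := by linarith
      linarith [eqA A hA hnt ham p x hp hx1 hpx, Krr A hA p,
        this ▸ (eqA A hA hnt ham p x hp hx1 hpx)]
    have Er := E r hr (Ne.symm hx2)
    have Er' := E r' hr' (Ne.symm hx3)
    rw [← hd] at Er'
    have hpos1 := h3 x
    have hpos2 := sumpos A hA hnt x hx1
    have hfac : A.d x * ((∑ t, A.d t) - 1 - A.d x) * (kf A r - kf A r') = 0 := by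
      linear_combination Er - Er'
    have hne0 := mul_ne_zero (ne_of_gt hpos1) (ne_of_gt hpos2)
    have h0 : kf A r - kf A r' = 0 := by
      rcases mul_eq_zero.1 hfac with h | h
      · exact absurd h hne0
      · exact h
    linarith

lemma ainv (A : CAlgebraData R) (hA : IsCAlgebra A) (hnt : 4 ≤ Fintype.card R)
    (ham : IsAmorphic A) (r r' : R) (hr : r ≠ A.e) (hr' : r' ≠ A.e)
    (hd : A.d r = A.d r') : af A r = af A r' := by
  by_cases hrr : r = r'
  · rw [hrr]
  · obtain ⟨hx1, hx2, hx3⟩ := wp_spec A hnt r r'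
    set x : R := wp A r r' with hxdef
    have hk := kinv A hA hnt ham r r' hr hr' hd
    have S1 := Salpha A hA hnt ham r x hr hx1 (Ne.symm hx2)
    have S2 := Salpha A hA hnt ham x r hx1 hr hx2
    have S1' := Salpha A hA hnt ham r' x hr' hx1 (Ne.symm hx3)
    have S2' := Salpha A hA hnt ham x r' hx1 hr' hx3
    have hKs : Kf A r x = Kf A x r := Ksymm A hA hnt ham r x hr hx1
    have hKs' : Kf A r' x = Kf A x r' := Ksymm A hA hnt ham r' x hr' hx1
    rw [← hd] at S2'
    rw [← hk] at S1'
    linarith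
end Aux5

/-- a unit-preserving bijection `g` of a nontrivial amorphic `C`-algebra is
an automorphism iff it preserves the degrees. -/
theorem stmt_10 {R : Type*} [Fintype R] [DecidableEq R] (A : CAlgebraData R)
    (hA : IsCAlgebra A) (hnt : 4 ≤ Fintype.card R) (ham : IsAmorphic A)
    (g : R → R) (hg : Function.Bijective g) (hge : g A.e = A.e) :
    (∀ r s t, A.c (g r) (g s) (g t) = A.c r s t) ↔ (∀ r, A.d (g r) = A.d r) := by
  obtain ⟨h1, h2, h3, h4, h5, h6, h7, h8, h9, h10, h11⟩ := hA
  have hA : IsCAlgebra A := ⟨h1, h2, h3, h4, h5, h6, h7, h8, h9, h10, h11⟩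
  have hid := inv_id A hA hnt ham
  have hinj := hg.injective
  constructor
  · intro hc r
    have h := hc r r A.e
    rw [hge, h8, h8, hid, hid, if_pos rfl, if_pos rfl] at h
    exact h
  · intro hd r s t
    have hgE : ∀ x : R, g x = A.e → x = A.e := by
      intro x h; apply hinj; rw [h, hge]
    by_cases hrE : r = A.e
    · subst hrE; rw [hge, h4, h4]
      by_cases h : s = t
      · rw [if_pos h, if_pos (by rw [h])]
      · rw [if_neg h, if_neg (fun hh => h (hinj hh))]
    by_cases hsE : s = A.e
    · subst hsE; rw [hge, h5, h5]
      by_cases h : r = t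
      · rw [if_pos h, if_pos (by rw [h])]
      · rw [if_neg h, if_neg (fun hh => h (hinj hh))]
    by_cases htE : t = A.e
    · subst htE; rw [hge, h8, h8, hid, hid]
      by_cases h : s = r
      · rw [if_pos h, if_pos (by rw [h]), hd]
      · rw [if_neg h, if_neg (fun hh => h (hinj hh))]
    have hgr : g r ≠ A.e := fun h => hrE (hgE r h)
    have hgs : g s ≠ A.e := fun h => hsE (hgE s h)
    have hgt : g t ≠ A.e := fun h => htE (hgE t h)
    have hkr := kinv A hA hnt ham (g r) r hgr hrE (hd r)
    have hks := kinv A hA hnt ham (g s) s hgs hsE (hd s)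
    have hkt := kinv A hA hnt ham (g t) t hgt htE (hd t)
    by_cases hrs : r = s
    · subst hrs
      by_cases hrt : r = t
      · subst hrt
        have B1 := eqB A hA hnt ham r hrE
        have B2 := eqB A hA hnt ham (g r) hgr
        rw [Krr A hA] at B1
        rw [Krr A hA] at B2
        rw [hd r, hkr] at B2
        have key : A.d r * A.c (g r) (g r) (g r) = A.d r * A.c r r r := by
          linarith
        exact mul_left_cancel₀ (ne_of_gt (h3 r)) key
      · have hgrt : g r ≠ g t := fun h => hrt (hinj h)
        rw [cconstK A hA hnt ham r r t hrE hrE htE (Ne.symm hrt) (Ne.symm hrt),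
          cconstK A hA hnt ham (g r) (g r) (g t) hgr hgr hgt (Ne.symm hgrt)
            (Ne.symm hgrt),
          Krr A hA, Krr A hA, hd r, hkr]
    · have hgrs : g r ≠ g s := fun h => hrs (hinj h)
      by_cases htr : t = r
      · subst htr
        rw [crsr A hA hnt ham t s htE hsE hrs,
          crsr A hA hnt ham (g t) (g s) hgt hgs hgrs, hd s, hkt]
      by_cases hts : t = s
      · subst hts
        rw [ccomm A hA hnt ham r t t, ccomm A hA hnt ham (g r) (g t) (g t),
          crsr A hA hnt ham t r htE hrE htr,
          crsr A hA hnt ham (g t) (g r) hgt hgr (fun h => htr (hinj h)),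
          hd r, hkt]
      · have hgtr : g t ≠ g r := fun h => htr (hinj h)
        have hgts : g t ≠ g s := fun h => hts (hinj h)
        rw [cconstK A hA hnt ham r s t hrE hsE htE htr hts,
          cconstK A hA hnt ham (g r) (g s) (g t) hgr hgs hgt hgtr hgts]
        have S1 := Salpha A hA hnt ham r s hrE hsE hrs
        have S2 := Salpha A hA hnt ham (g r) (g s) hgr hgs hgrs
        have ha := ainv A hA hnt ham (g s) s hgs hsE (hd s)
        rw [hd s, hkr, ha] at S2
        linarith
end

section
/- Let (R, e, *, d, c) be a nontrivial amorphic C-algebra of degree n with sign ε, and let d > 0 be a real number such that d_r/d is a positive integer for every r ∈ R^#. Then, with ν = (n − 1)/d + 1, there exist a nontrivial amorphic homogeneous C-algebra (R', e', *', d', c') with |R'| = ν, with d'_u = d for all u ∈ R'^#, and with sign ε, together with a partition π' of R' with {e'} ∈ π' and a bijection φ : R → π' with φ(e) = {e'} and |φ(r)| = d_r/d for all r, such that c_{r,s}^t = Σ_{u∈φ(r)} Σ_{v∈φ(s)} c'_{u,v}^w for all r, s, t ∈ R and every w ∈ φ(t). That is, (R, e, *, d, c) is a fusion of a homogeneous amorphic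 C-algebra of dimension ν and common degree d. -/
open Finset

/-!
A nontrivial amorphic C-algebra is symmetric, and its sign determines all of its structure
constants: with `q = √n + ε`, for `r, s, t ∈ R^#`,

  `q² c_{r,s}^t = d_r d_s + εq (d_r [r = s] + d_s [r = t] + d_r [s = t])`
  `               + (q² - εq³) [r = s = t]`.

Amorphy for the partition `{e}, {t}, R^# \ {t}` shows that `q² c_{t,u}^u - d_t d_u` does not
depend on `u`, and (C4) for the pairs among three elements of `R^#` then forces it to be
`εq d_t`; the remaining constants follow from (C4) and the exchange rule
`d_t c_{r,s}^t = d_r c_{s,t}^r`.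

Conversely this closed formula (`amorphicConst`) defines a C-algebra for every positive degree
function `δ` with `δ_e = 1` and `∑ δ = (q - ε)²`: it has an explicit family of multiplicative
functionals (`amorphicChar`) separating points, which forces associativity. Summing the formula
over the classes of a partition gives the formula for the summed degrees, which yields amorphy
and, after splitting every `r ∈ R^#` into `d_r / d` points of degree `d`, the fusion.
-/

namespace IsCAlgebra

variable {R : Type*} [Fintype R] [DecidableEq R] {A : CAlgebraData R}

lemma inv_e (hA : IsCAlgebra A) : A.inv A.e = A.e := hA.1

lemma inv_inv (hA : IsCAlgebra A) (r : R) : A.inv (A.inv r) = r := hA.2.1 r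

lemma d_pos (hA : IsCAlgebra A) (r : R) : 0 < A.d r := hA.2.2.1 r

lemma c_e_left (hA : IsCAlgebra A) (s t : R) : A.c A.e s t = if s = t then 1 else 0 :=
  hA.2.2.2.1 s t

lemma c_e_right (hA : IsCAlgebra A) (r t : R) : A.c r A.e t = if r = t then 1 else 0 :=
  hA.2.2.2.2.1 r t

lemma assoc (hA : IsCAlgebra A) (r s t u : R) :
    ∑ v, A.c r s v * A.c v t u = ∑ v, A.c r v u * A.c s t v :=
  hA.2.2.2.2.2.1 r s t u

lemma c_inv (hA : IsCAlgebra A) (r s t : R) : A.c r s t = A.c (A.inv s) (A.inv r) (A.inv t) :=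
  hA.2.2.2.2.2.2.1 r s t

lemma c_apply_e (hA : IsCAlgebra A) (r s : R) :
    A.c r s A.e = if s = A.inv r then A.d r else 0 :=
  hA.2.2.2.2.2.2.2.1 r s

lemma d_e (hA : IsCAlgebra A) : A.d A.e = 1 := hA.2.2.2.2.2.2.2.2.1

lemma sum_d_mul_c (hA : IsCAlgebra A) (r s : R) : ∑ t, A.d t * A.c r s t = A.d r * A.d s :=
  hA.2.2.2.2.2.2.2.2.2.2 r s

lemma sum_erase_d (hA : IsCAlgebra A) : ∑ r ∈ univ.erase A.e, A.d r = A.degree - 1 := by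
  rw [CAlgebraData.degree, ← add_sum_erase _ _ (mem_univ A.e), hA.d_e, add_sub_cancel_left]

end IsCAlgebra

section Fibers

variable {X R : Type*} [Fintype X] [DecidableEq R]

lemma IsPartition.exists_classMap {π : Finset (Finset X)} (hπ : IsPartition π) :
    ∃ p : X → Finset X, ∀ S ∈ π, ∀ x, x ∈ S ↔ p x = S := by
  choose p hp huniq using hπ.2
  exact ⟨p, fun S hS x => ⟨fun hx => (huniq x S ⟨hS, hx⟩).symm, fun h => h ▸ (hp x).2⟩⟩

lemma isPartition_image_fiber [DecidableEq X] [Fintype R] {p : X → R} (hp : Function.Surjective p) :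
    IsPartition (univ.image fun a => univ.filter (p · = a)) := by
  refine ⟨?_, fun x => ⟨univ.filter (p · = p x), by simp, ?_⟩⟩
  · simp only [mem_image, mem_univ, true_and, forall_exists_index, forall_apply_eq_imp_iff]
    intro a
    obtain ⟨x, rfl⟩ := hp a
    exact ⟨x, by simp⟩
  · rintro S ⟨hS, hxS⟩
    obtain ⟨a, -, rfl⟩ := mem_image.1 hS
    rw [(mem_filter.1 hxS).2]

lemma injective_fiber {p : X → R} (hp : Function.Surjective p) :
    Function.Injective fun a => univ.filter (p · = a) := by
  intro a b hab
  obtain ⟨x, rfl⟩ := hp a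
  have hx : x ∈ univ.filter (p · = b) := by
    rw [← show univ.filter (p · = p x) = univ.filter (p · = b) from hab]
    simp
  exact (mem_filter.1 hx).2

lemma sum_fiber_ite_eq [DecidableEq X] (p : X → R) (c : R) (w : X) (f : X → ℝ) :
    ∑ u ∈ univ.filter (p · = c), (if u = w then f u else 0) = if c = p w then f w else 0 := by
  simp [eq_comm]

lemma sum_fiber_sum_fiber_ite_eq [DecidableEq X] (p : X → R) (a b : R) (f : X → ℝ) :
    ∑ u ∈ univ.filter (p · = a), ∑ v ∈ univ.filter (p · = b), (if u = v then f u else 0)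
      = if a = b then ∑ u ∈ univ.filter (p · = a), f u else 0 := by
  simp only [sum_ite_eq, mem_filter, mem_univ, true_and]
  split_ifs with hab
  · exact sum_congr rfl fun u hu => if_pos ((mem_filter.1 hu).2.trans hab)
  · exact sum_eq_zero fun u hu => if_neg fun h => hab ((mem_filter.1 hu).2.symm.trans h)

lemma sum_erase_eq_sum_erase_fiber [DecidableEq X] [Fintype R] {p : X → R} {e : R} {e' : X}
    (hpe : ∀ u, p u = e ↔ u = e') (f : X → ℝ) :
    ∑ u ∈ univ.erase e', f u = ∑ r ∈ univ.erase e, ∑ u ∈ univ.filter (p · = r), f u := by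
  have hfib : univ.filter (p · = e) = {e'} := by ext u; simp [hpe]
  have h := sum_fiberwise univ p f
  rw [← add_sum_erase _ _ (mem_univ e), hfib, sum_singleton,
    ← add_sum_erase _ _ (mem_univ e')] at h
  exact (add_left_cancel h).symm

lemma exists_fin_fiber_card [Fintype R] (k : R → ℕ) :
    ∃ p : Fin (∑ r, k r) → R, ∀ r, (univ.filter (p · = r)).card = k r := by
  let E : (Σ r, Fin (k r)) ≃ Fin (∑ r, k r) := Fintype.equivFinOfCardEq (by simp)
  refine ⟨fun x => (E.symm x).1, fun r => ?_⟩
  have hmap : univ.filter (fun x => (E.symm x).1 = r)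
      = (univ.filter fun y : Σ r, Fin (k r) => y.1 = r).map E.toEmbedding := by
    ext x
    simp only [mem_filter, mem_univ, true_and, mem_map, Equiv.coe_toEmbedding]
    exact ⟨fun h => ⟨E.symm x, h, E.apply_symm_apply x⟩, by rintro ⟨y, rfl, rfl⟩; simp⟩
  rw [hmap, card_map, card_filter, Fintype.sum_sigma]
  simp [apply_ite Finset.card]

lemma exists_fiber_refinement [Fintype R] {D : R → ℝ} {e : R} {d : ℝ} (hDe : D e = 1)
    (hdiv : ∀ r, r ≠ e → ∃ k : ℕ, 0 < k ∧ D r = k * d) :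
    ∃ (N : ℕ) (p : Fin N → R) (e' : Fin N), Function.Surjective p ∧ (∀ u, p u = e ↔ u = e') ∧
      ∀ r, ∑ u ∈ univ.filter (p · = r), (if u = e' then 1 else d) = D r := by
  choose! k hkpos hk using hdiv
  let m : R → ℕ := fun r => if r = e then 1 else k r
  obtain ⟨p, hp⟩ := exists_fin_fiber_card m
  obtain ⟨e', he'⟩ := card_eq_one.1 ((hp e).trans (if_pos rfl))
  have hpe : ∀ u, p u = e ↔ u = e' := fun u => by simpa using Finset.ext_iff.1 he' u
  refine ⟨_, p, e', fun r => ?_, hpe, fun r => ?_⟩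
  · have hm : 0 < m r := by by_cases hr : r = e <;> simp [m, hr, hkpos]
    obtain ⟨x, hx⟩ := card_pos.1 ((hp r).symm ▸ hm)
    exact ⟨x, (mem_filter.1 hx).2⟩
  · by_cases hr : r = e
    · subst hr
      rw [he', sum_singleton, if_pos rfl, hDe]
    · rw [sum_congr rfl fun u hu => if_neg fun h => hr (by rw [← (mem_filter.1 hu).2, (hpe u).2 h]),
        sum_const, hp r, nsmul_eq_mul]
      simp [m, hr, hk r hr]

end Fibers

lemma sum_mul_assoc_of_characters {X ι : Type*} [Fintype X] (c : X → X → X → ℝ)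
    (χ : ι → X → ℝ) (hχ : ∀ i u s, χ i u * χ i s = ∑ v, c u s v * χ i v)
    (hsep : ∀ g : X → ℝ, (∀ i, ∑ w, g w * χ i w = 0) → g = 0) (u s t w : X) :
    ∑ v, c u s v * c v t w = ∑ v, c u v w * c s t v := by
  refine sub_eq_zero.1 (congrFun (hsep (fun w => ∑ v, c u s v * c v t w - ∑ v, c u v w * c s t v)
    fun i => ?_) w)
  have hL : ∑ w, (∑ v, c u s v * c v t w) * χ i w = χ i u * χ i s * χ i t := by
    simp_rw [sum_mul, mul_assoc]
    rw [sum_comm]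
    simp_rw [← mul_sum, ← hχ, ← mul_assoc, ← sum_mul, ← hχ]
  have hR : ∑ w, (∑ v, c u v w * c s t v) * χ i w = χ i u * (χ i s * χ i t) := by
    simp_rw [sum_mul, mul_comm (c u _ _), mul_assoc]
    rw [sum_comm]
    simp_rw [← mul_sum, ← hχ, mul_left_comm _ (χ i u), ← mul_sum, ← hχ]
  simp only [sub_mul, sum_sub_distrib, hL, hR, mul_assoc, sub_self]

section AmorphicConst

variable {X : Type*} [DecidableEq X]

noncomputable def amorphicConst (e : X) (δ : X → ℝ) (q ε : ℝ) (r s t : X) : ℝ :=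
  if r = e then if s = t then 1 else 0
  else if s = e then if r = t then 1 else 0
  else if t = e then if r = s then δ r else 0
  else (δ r * δ s + ε * q * ((if r = s then δ r else 0) + (if r = t then δ s else 0)
      + (if s = t then δ r else 0)) + if r = s ∧ r = t then q ^ 2 - ε * q ^ 3 else 0) / q ^ 2

noncomputable def amorphicChar (e : X) (δ : X → ℝ) (q ε : ℝ) (i u : X) : ℝ :=
  if i = e then δ u else if u = e then 1 else ε * δ u / q + if u = i then 1 - ε * q else 0

variable {e : X} {δ : X → ℝ} {q ε : ℝ}

lemma amorphicConst_comm (r s t : X) :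
    amorphicConst e δ q ε r s t = amorphicConst e δ q ε s r t := by
  unfold amorphicConst
  by_cases hr : r = e <;> by_cases hs : s = e <;> by_cases ht : t = e <;>
    by_cases hrs : r = s <;> by_cases hrt : r = t <;> by_cases hst : s = t <;>
    simp_all [eq_comm] <;> ring

lemma amorphicChar_e (hδe : δ e = 1) (i : X) : amorphicChar e δ q ε i e = 1 := by
  by_cases hi : i = e <;> simp [amorphicChar, hi, hδe]

variable [Fintype X]

lemma sum_amorphicConst_e_left (s : X) (f : X → ℝ) :
    ∑ v, amorphicConst e δ q ε e s v * f v = f s := by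
  simp [amorphicConst]

lemma sum_erase_mul_amorphicConst (hq : q ≠ 0) (hε : ε = -1 ∨ ε = 1)
    (hδ : ∑ v ∈ univ.erase e, δ v = q ^ 2 - 2 * ε * q) {u s : X} (hu : u ≠ e) (hs : s ≠ e) :
    ∑ v ∈ univ.erase e, δ v * amorphicConst e δ q ε u s v
      = δ u * δ s - if u = s then δ u else 0 := by
  have hu' : u ∈ univ.erase e := mem_erase.2 ⟨hu, mem_univ u⟩
  have hs' : s ∈ univ.erase e := mem_erase.2 ⟨hs, mem_univ s⟩
  rw [sum_congr rfl fun v hv => by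
    rw [amorphicConst, if_neg hu, if_neg hs, if_neg (ne_of_mem_erase hv)]]
  simp only [mul_div_assoc', ← sum_div, mul_add, mul_ite, mul_zero, sum_add_distrib, ite_and,
    sum_ite_irrel, sum_const_zero, sum_ite_eq, if_pos hu', if_pos hs', ← sum_mul, hδ]
  field_simp
  split_ifs with hus
  · subst hus
    rcases hε with rfl | rfl <;> ring
  · ring

lemma amorphicChar_mul (hδe : δ e = 1) (hq : q ≠ 0) (hε : ε = -1 ∨ ε = 1)
    (hδ : ∑ v ∈ univ.erase e, δ v = q ^ 2 - 2 * ε * q) (i u s : X) :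
    amorphicChar e δ q ε i u * amorphicChar e δ q ε i s
      = ∑ v, amorphicConst e δ q ε u s v * amorphicChar e δ q ε i v := by
  by_cases hu : u = e
  · rw [hu, sum_amorphicConst_e_left, amorphicChar_e hδe, one_mul]
  by_cases hs : s = e
  · simp_rw [amorphicConst_comm u s, hs, sum_amorphicConst_e_left, amorphicChar_e hδe, mul_one]
  have hCe : amorphicConst e δ q ε u s e = if u = s then δ u else 0 := by
    simp [amorphicConst, hu, hs]
  rw [← add_sum_erase _ _ (mem_univ e), amorphicChar_e hδe, mul_one, hCe]
  by_cases hi : i = e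
  · simp only [amorphicChar, hi, if_true]
    rw [sum_congr rfl fun v _ => mul_comm (amorphicConst e δ q ε u s v) (δ v),
      sum_erase_mul_amorphicConst hq hε hδ hu hs]
    ring
  have hsum : ∑ v ∈ univ.erase e, amorphicConst e δ q ε u s v * amorphicChar e δ q ε i v
      = ε / q * (δ u * δ s - if u = s then δ u else 0)
        + (1 - ε * q) * amorphicConst e δ q ε u s i := by
    have hterm : ∀ v ∈ univ.erase e, amorphicConst e δ q ε u s v * amorphicChar e δ q ε i v
        = ε / q * (δ v * amorphicConst e δ q ε u s v)
          + if v = i then (1 - ε * q) * amorphicConst e δ q ε u s v else 0 := by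
      intro v hv
      simp only [amorphicChar, hi, ne_of_mem_erase hv, if_false]
      split_ifs <;> ring
    rw [sum_congr rfl hterm, sum_add_distrib, ← mul_sum,
      sum_erase_mul_amorphicConst hq hε hδ hu hs, sum_ite_eq',
      if_pos (mem_erase.2 ⟨hi, mem_univ i⟩)]
  rw [hsum]
  simp only [amorphicChar, amorphicConst, hi, hu, hs, if_false]
  field_simp
  split_ifs <;> subst_vars <;> first | (rcases hε with rfl | rfl <;> ring1) | tauto

lemma amorphicChar_separates (hδe : δ e = 1) (hq : q ≠ 0) (hqε : q ≠ ε)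
    (hε : ε = -1 ∨ ε = 1) (hδ : ∑ v ∈ univ.erase e, δ v = q ^ 2 - 2 * ε * q) (g : X → ℝ)
    (hg : ∀ i, ∑ w, g w * amorphicChar e δ q ε i w = 0) : g = 0 := by
  set S := ∑ w ∈ univ.erase e, δ w * g w
  have hε2 : ε ^ 2 = 1 := by rcases hε with rfl | rfl <;> norm_num
  have hεq : 1 - ε * q ≠ 0 := fun h => hqε <| by linear_combination (-ε) * h - q * hε2
  have row_e : g e + S = 0 := by
    have := hg e
    simp only [amorphicChar, if_true] at this
    rw [← add_sum_erase _ _ (mem_univ e), hδe, mul_one] at this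
    simpa only [S, mul_comm] using this
  have row : ∀ i ∈ univ.erase e, q * (1 - ε * q) * g i = (q - ε) * S := by
    intro i hi
    have := hg i
    rw [← add_sum_erase _ _ (mem_univ e)] at this
    have hsplit : ∀ w ∈ univ.erase e, g w * amorphicChar e δ q ε i w
        = ε / q * (δ w * g w) + if w = i then (1 - ε * q) * g w else 0 := by
      intro w hw
      simp only [amorphicChar, ne_of_mem_erase hi, ne_of_mem_erase hw, if_false]
      split_ifs <;> ring
    rw [sum_congr rfl hsplit, sum_add_distrib, ← mul_sum, sum_ite_eq', if_pos hi,
      amorphicChar_e hδe, mul_one] at this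
    field_simp at this
    linear_combination this - q * row_e
  have hS : S = 0 := by
    have hsum : q * (1 - ε * q) * S = (q - ε) * S * (q ^ 2 - 2 * ε * q) := by
      calc q * (1 - ε * q) * S = ∑ i ∈ univ.erase e, δ i * (q * (1 - ε * q) * g i) := by
            simp only [S, mul_sum]; exact sum_congr rfl fun i _ => by ring
        _ = ∑ i ∈ univ.erase e, δ i * ((q - ε) * S) := sum_congr rfl fun i hi => by
            rw [row i hi]
        _ = (q - ε) * S * (q ^ 2 - 2 * ε * q) := by rw [← sum_mul, hδ]; ring
    have : q * (q - ε) ^ 2 * S = 0 := by linear_combination -hsum - q * S * hε2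
    simpa [hq, sub_ne_zero.2 hqε] using this
  funext w
  by_cases hw : w = e
  · subst hw; simpa [hS] using row_e
  · simpa [hS, hq, hεq] using row w (mem_erase.2 ⟨hw, mem_univ w⟩)

lemma sum_fiber_amorphicConst {Y : Type*} [DecidableEq Y] (p : X → Y)
    (hp : ∀ u, p u = p e ↔ u = e) (a b : Y) (w : X) :
    ∑ u ∈ univ.filter (p · = a), ∑ v ∈ univ.filter (p · = b), amorphicConst e δ q ε u v w
      = amorphicConst (p e) (fun a => ∑ u ∈ univ.filter (p · = a), δ u) q ε a b (p w) := by
  have hFe : univ.filter (p · = p e) = {e} := by ext u; simp [hp]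
  have hne : ∀ {c u}, c ≠ p e → u ∈ univ.filter (p · = c) → u ≠ e := fun hc hu hue =>
    hc (by rw [← hue, ← (mem_filter.1 hu).2])
  by_cases ha : a = p e
  · subst ha
    rw [hFe, sum_singleton]
    simp only [amorphicConst, if_true]
    exact sum_fiber_ite_eq p b w fun _ => 1
  by_cases hb : b = p e
  · subst hb
    rw [sum_congr rfl fun u hu => by
      rw [hFe, sum_singleton, amorphicConst, if_neg (hne ha hu), if_pos rfl]]
    simp only [amorphicConst, if_neg ha, if_true]
    exact sum_fiber_ite_eq p a w fun _ => 1
  by_cases hw : w = e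
  · subst hw
    rw [sum_congr rfl fun u hu => sum_congr rfl fun v hv => by
      rw [amorphicConst, if_neg (hne ha hu), if_neg (hne hb hv), if_pos rfl]]
    simp only [amorphicConst, if_neg ha, if_neg hb, if_true]
    exact sum_fiber_sum_fiber_ite_eq p a b δ
  have hw' : p w ≠ p e := fun h => hw ((hp w).1 h)
  rw [sum_congr rfl fun u hu => sum_congr rfl fun v hv => by
      rw [amorphicConst, if_neg (hne ha hu), if_neg (hne hb hv), if_neg hw]]
  simp only [amorphicConst, if_neg ha, if_neg hb, if_neg hw']
  simp only [← sum_div, sum_add_distrib, ← mul_sum, ← sum_mul, sum_fiber_sum_fiber_ite_eq, ite_and,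
    sum_fiber_ite_eq, sum_ite_irrel, sum_const_zero]

end AmorphicConst

section AmorphicAlgebra

variable {X : Type*} [DecidableEq X] [Fintype X] {e : X} {δ : X → ℝ} {q ε : ℝ}

noncomputable def amorphicAlgebra (e : X) (δ : X → ℝ) (q ε : ℝ) : CAlgebraData X :=
  ⟨e, id, δ, amorphicConst e δ q ε⟩

lemma isCAlgebra_amorphicAlgebra (hδpos : ∀ u, 0 < δ u) (hδe : δ e = 1) (hq : q ≠ 0)
    (hqε : q ≠ ε) (hε : ε = -1 ∨ ε = 1) (hδ : ∑ v ∈ univ.erase e, δ v = q ^ 2 - 2 * ε * q) :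
    IsCAlgebra (amorphicAlgebra e δ q ε) := by
  refine ⟨rfl, fun _ => rfl, hδpos, fun s t => by simp [amorphicAlgebra, amorphicConst],
    fun r t => ?_, sum_mul_assoc_of_characters _ _ (amorphicChar_mul hδe hq hε hδ)
      (amorphicChar_separates hδe hq hqε hε hδ), fun r s t => amorphicConst_comm r s t,
    fun r s => ?_, hδe, fun _ => rfl, fun r s => ?_⟩
  · by_cases hr : r = e <;> simp [amorphicAlgebra, amorphicConst, hr]
  · by_cases hr : r = e
    · subst hr
      simp [amorphicAlgebra, amorphicConst, hδe, eq_comm]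
    · by_cases hs : s = e
      · simp [amorphicAlgebra, amorphicConst, hr, hs, Ne.symm hr]
      · simp [amorphicAlgebra, amorphicConst, hr, hs, eq_comm]
  · simpa [amorphicAlgebra, amorphicChar, mul_comm] using (amorphicChar_mul hδe hq hε hδ e r s).symm

lemma isAmorphic_amorphicAlgebra : IsAmorphic (amorphicAlgebra e δ q ε) := by
  intro π hπ heπ
  refine ⟨fun S hS => by simpa [amorphicAlgebra] using hS, fun S hS T hT U hU u hu v hv => ?_⟩
  replace heπ : {e} ∈ π := heπ
  obtain ⟨p, hp⟩ := hπ.exists_classMap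
  have hfiber : ∀ S ∈ π, univ.filter (p · = S) = S := fun S hS => by
    ext x; simp [hp S hS]
  have hpe : ∀ x, p x = p e ↔ x = e := fun x => by
    rw [(hp _ heπ e).1 (mem_singleton_self e), ← hp _ heπ, mem_singleton]
  show ∑ r ∈ S, ∑ s ∈ T, amorphicConst e δ q ε r s u = ∑ r ∈ S, ∑ s ∈ T, amorphicConst e δ q ε r s v
  rw [← hfiber S hS, ← hfiber T hT, sum_fiber_amorphicConst p hpe, sum_fiber_amorphicConst p hpe,
    (hp U hU u).1 hu, (hp U hU v).1 hv]

lemma isSign_amorphicAlgebra (hδe : δ e = 1) (hq : 0 < q) (hqε : ε < q)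
    (hε : ε = -1 ∨ ε = 1) (hδ : ∑ v ∈ univ.erase e, δ v = q ^ 2 - 2 * ε * q) :
    IsSign (amorphicAlgebra e δ q ε) ε := by
  have hdeg : (amorphicAlgebra e δ q ε).degree = (q - ε) ^ 2 := by
    rw [CAlgebraData.degree, ← add_sum_erase _ _ (mem_univ e)]
    simp only [amorphicAlgebra, hδe, hδ]
    rcases hε with rfl | rfl <;> ring
  have hsqrt : Real.sqrt (amorphicAlgebra e δ q ε).degree + ε = q := by
    rw [hdeg, Real.sqrt_sq (sub_nonneg.2 hqε.le), sub_add_cancel]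
  refine ⟨hε, hsqrt ▸ hq, fun r s t (hr : r ≠ e) (hs : s ≠ e) (ht : t ≠ e) hrs hst hrt => ?_⟩
  rw [hsqrt]
  simp [amorphicAlgebra, amorphicConst, hr, hs, ht, hrs, hst, hrt]

end AmorphicAlgebra

section Rigidity

variable {R : Type*} [Fintype R] [DecidableEq R] {A : CAlgebraData R} {q ε : ℝ}

lemma IsAmorphic.fiber_partition {Y : Type*} [Fintype Y] [DecidableEq Y] (ham : IsAmorphic A)
    {p : R → Y} (hp : Function.Surjective p) (he : ∀ x, p x = p A.e → x = A.e) :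
    (∀ a, ∃ b, (univ.filter (p · = a)).image A.inv = univ.filter (p · = b)) ∧
      ∀ a b u v, p u = p v → ∑ r ∈ univ.filter (p · = a), ∑ s ∈ univ.filter (p · = b), A.c r s u
        = ∑ r ∈ univ.filter (p · = a), ∑ s ∈ univ.filter (p · = b), A.c r s v := by
  have hmem : ∀ a, univ.filter (p · = a) ∈ univ.image fun a => univ.filter (p · = a) :=
    fun a => mem_image_of_mem _ (mem_univ a)
  have hfe : univ.filter (p · = p A.e) = {A.e} := by
    ext x; simpa using ⟨he x, fun h => h ▸ rfl⟩
  obtain ⟨hinv, hsum⟩ := ham _ (isPartition_image_fiber hp) (hfe ▸ hmem (p A.e))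
  refine ⟨fun a => ?_, fun a b u v huv => hsum _ (hmem a) _ (hmem b) _ (hmem (p u)) u ?_ v ?_⟩
  · obtain ⟨b, -, hb⟩ := mem_image.1 (hinv _ (hmem a))
    exact ⟨b, hb.symm⟩
  · simp
  · simp [huv]

lemma surjective_threeClass (hnt : 3 ≤ Fintype.card R) {t : R} (ht : t ≠ A.e) :
    Function.Surjective fun x => if x = A.e then (0 : Fin 3) else if x = t then 1 else 2 := by
  obtain ⟨w, -, hw⟩ := exists_mem_notMem_of_card_lt_card (s := {A.e, t}) (t := univ)
    (by simpa using card_le_two.trans_lt (by omega))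
  simp only [mem_insert, mem_singleton, not_or] at hw
  intro a
  fin_cases a
  · exact ⟨A.e, by simp⟩
  · exact ⟨t, by simp [ht]⟩
  · exact ⟨w, by simp [hw.1, hw.2]⟩

lemma IsAmorphic.inv_eq_self (hA : IsCAlgebra A) (hnt : 4 ≤ Fintype.card R)
    (ham : IsAmorphic A) (r : R) : A.inv r = r := by
  by_cases hr : r = A.e
  · exact hr ▸ hA.inv_e
  obtain ⟨b, hb⟩ := (ham.fiber_partition (surjective_threeClass (by omega) hr)
    (by intro x; split_ifs <;> simp_all)).1 1
  obtain ⟨w, -, hw⟩ := exists_mem_notMem_of_card_lt_card (s := {A.e, r}) (t := univ)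
    (by simpa using card_le_two.trans_lt (by omega))
  obtain ⟨w', -, hw'⟩ := exists_mem_notMem_of_card_lt_card (s := {A.e, r, w}) (t := univ)
    (by simpa using card_le_three.trans_lt (by omega))
  simp only [mem_insert, mem_singleton, not_or] at hw hw'
  have hfib1 : univ.filter (fun x => (if x = A.e then (0 : Fin 3) else if x = r then 1 else 2) = 1)
      = {r} := by ext x; by_cases hx : x = A.e <;> simp [hx, Ne.symm hr]
  rw [hfib1, image_singleton, Finset.ext_iff] at hb
  fin_cases b
  · have hre : A.inv r = A.e := by
      have := (hb (A.inv r)).1 (mem_singleton_self _)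
      by_contra h
      simp [h] at this
      split_ifs at this <;> simp at this
    exact absurd (by rw [← hA.inv_inv r, hre, hA.inv_e]) hr
  · exact (mem_singleton.1 ((hb r).2 (by simp [hr]))).symm
  · have h1 := (hb w).2 (by simp [hw.1, hw.2])
    have h2 := (hb w').2 (by simp [hw'.1, hw'.2.1])
    exact absurd ((mem_singleton.1 h2).trans (mem_singleton.1 h1).symm) hw'.2.2

lemma IsAmorphic.excess_eq (hnt : 3 ≤ Fintype.card R) (ham : IsAmorphic A)
    (hsign : ∀ r s t, r ≠ A.e → s ≠ A.e → t ≠ A.e → r ≠ s → s ≠ t → r ≠ t →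
      A.c r s t = A.d r * A.d s / q ^ 2)
    {t u u' : R} (ht : t ≠ A.e) (hu : u ≠ A.e) (hu' : u' ≠ A.e) (hut : u ≠ t) (hu't : u' ≠ t) :
    A.c t u u - A.d t * A.d u / q ^ 2 = A.c t u' u' - A.d t * A.d u' / q ^ 2 := by
  set p := fun x => if x = A.e then (0 : Fin 3) else if x = t then 1 else 2
  have hsum := (ham.fiber_partition (surjective_threeClass hnt ht)
    (by intro x; split_ifs <;> simp_all)).2 1 2 u u' (by simp [hu, hut, hu', hu't])
  have hfib1 : univ.filter (p · = 1) = {t} := by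
    ext x; by_cases hx : x = A.e <;> simp [p, hx, Ne.symm ht]
  have hmem : ∀ w, w ∈ univ.filter (p · = 2) ↔ w ≠ A.e ∧ w ≠ t := by
    intro w; simp only [p, mem_filter, mem_univ, true_and]; split_ifs <;> simp_all
  have hterm : ∀ w, w ≠ A.e → w ≠ t → ∀ s ∈ univ.filter (p · = 2), A.c t s w
      = A.d t * A.d s / q ^ 2 + if s = w then A.c t w w - A.d t * A.d w / q ^ 2 else 0 := by
    intro w hw hwt s hs
    obtain ⟨hse, hst⟩ := (hmem s).1 hs
    split_ifs with hsw
    · rw [hsw]; ring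
    · rw [hsign t s w ht hse hw (Ne.symm hst) hsw (Ne.symm hwt), add_zero]
  rw [hfib1, sum_singleton, sum_singleton, sum_congr rfl (hterm u hu hut),
    sum_congr rfl (hterm u' hu' hu't), sum_add_distrib, sum_add_distrib, sum_ite_eq', sum_ite_eq',
    if_pos ((hmem u).2 ⟨hu, hut⟩), if_pos ((hmem u').2 ⟨hu', hu't⟩)] at hsum
  linarith

lemma IsCAlgebra.c_comm (hA : IsCAlgebra A) (hsym : ∀ r, A.inv r = r) (r s t : R) :
    A.c r s t = A.c s r t := by
  rw [hA.c_inv r s t, hsym, hsym, hsym]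

lemma IsCAlgebra.c_apply_e_of_symm (hA : IsCAlgebra A) (hsym : ∀ r, A.inv r = r) (r s : R) :
    A.c r s A.e = if r = s then A.d r else 0 := by
  simp only [hA.c_apply_e r s, hsym, eq_comm]

lemma IsCAlgebra.d_mul_c_of_symm (hA : IsCAlgebra A) (hsym : ∀ r, A.inv r = r) (r s t : R) :
    A.d t * A.c r s t = A.d r * A.c s t r := by
  have h := hA.assoc r s t A.e
  simp only [hA.c_apply_e_of_symm hsym, mul_ite, ite_mul, mul_zero, zero_mul, sum_ite_eq,
    sum_ite_eq', mem_univ, if_true] at h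
  linear_combination h

lemma IsCAlgebra.pair_excess (hA : IsCAlgebra A) (hsym : ∀ r, A.inv r = r) (hq : q ≠ 0)
    (hsign : ∀ r s t, r ≠ A.e → s ≠ A.e → t ≠ A.e → r ≠ s → s ≠ t → r ≠ t →
      A.c r s t = A.d r * A.d s / q ^ 2)
    (hD : ∑ v ∈ univ.erase A.e, A.d v = q ^ 2 - 2 * ε * q)
    {t u : R} (ht : t ≠ A.e) (hu : u ≠ A.e) (htu : t ≠ u) :
    A.d u * (A.c t u u - A.d t * A.d u / q ^ 2) + A.d t * (A.c u t t - A.d u * A.d t / q ^ 2)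
      = 2 * ε * A.d t * A.d u / q := by
  have hC4 := hA.sum_d_mul_c t u
  have hterm : ∀ v ∈ univ.erase A.e, A.d v * A.c t u v = A.d v * (A.d t * A.d u / q ^ 2)
      + (if v = u then A.d u * (A.c t u u - A.d t * A.d u / q ^ 2) else 0)
      + (if v = t then A.d t * (A.c u t t - A.d u * A.d t / q ^ 2) else 0) := by
    intro v hv
    by_cases hvu : v = u
    · subst hvu; rw [if_pos rfl, if_neg (Ne.symm htu)]; ring
    by_cases hvt : v = t
    · subst hvt; rw [hA.c_comm hsym, if_neg hvu, if_pos rfl]; ring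
    · rw [hsign t u v ht hu (ne_of_mem_erase hv) htu (Ne.symm hvu) (Ne.symm hvt), if_neg hvu,
        if_neg hvt]
      ring
  rw [← add_sum_erase _ _ (mem_univ A.e), hA.c_apply_e_of_symm hsym, if_neg htu, mul_zero,
    zero_add, sum_congr rfl hterm, sum_add_distrib, sum_add_distrib, sum_ite_eq', sum_ite_eq',
    if_pos (mem_erase.2 ⟨hu, mem_univ u⟩), if_pos (mem_erase.2 ⟨ht, mem_univ t⟩), ← sum_mul,
    hD] at hC4
  have hK : (q ^ 2 - 2 * ε * q) * (A.d t * A.d u / q ^ 2)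
      = A.d t * A.d u - 2 * ε * A.d t * A.d u / q := by
    field_simp
  linear_combination hC4 - hK

lemma IsAmorphic.c_mixed (hA : IsCAlgebra A) (hnt : 4 ≤ Fintype.card R) (ham : IsAmorphic A)
    (hq : q ≠ 0)
    (hsign : ∀ r s t, r ≠ A.e → s ≠ A.e → t ≠ A.e → r ≠ s → s ≠ t → r ≠ t →
      A.c r s t = A.d r * A.d s / q ^ 2)
    (hD : ∑ v ∈ univ.erase A.e, A.d v = q ^ 2 - 2 * ε * q)
    {t u : R} (ht : t ≠ A.e) (hu : u ≠ A.e) (htu : t ≠ u) :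
    A.c t u u = (A.d t * A.d u + ε * q * A.d t) / q ^ 2 := by
  obtain ⟨w, -, hw⟩ := exists_mem_notMem_of_card_lt_card (s := {A.e, t, u}) (t := univ)
    (by simpa using card_le_three.trans_lt (by omega))
  simp only [mem_insert, mem_singleton, not_or] at hw
  obtain ⟨hw, hwt, hwu⟩ := hw
  have hsym := ham.inv_eq_self hA hnt
  have hnt3 : 3 ≤ Fintype.card R := by omega
  have p1 := hA.pair_excess hsym hq hsign hD ht hu htu
  have p2 := hA.pair_excess hsym hq hsign hD ht hw (Ne.symm hwt)
  have p3 := hA.pair_excess hsym hq hsign hD hu hw (Ne.symm hwu)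
  have e1 := ham.excess_eq hnt3 hsign ht hu hw (Ne.symm htu) hwt
  have e2 := ham.excess_eq hnt3 hsign hu ht hw htu hwu
  have e3 := ham.excess_eq hnt3 hsign hw ht hu (Ne.symm hwt) (Ne.symm hwu)
  have key : A.c t u u - A.d t * A.d u / q ^ 2 = ε * A.d t / q := by
    apply mul_left_cancel₀ (mul_ne_zero (mul_ne_zero two_ne_zero (hA.d_pos u).ne') (hA.d_pos w).ne')
    linear_combination A.d w * p1 + A.d u * p2 - A.d t * p3 + A.d u * A.d w * e1
      - A.d t * A.d w * e2 - A.d t * A.d u * e3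
  rw [← sub_add_cancel (A.c t u u) (A.d t * A.d u / q ^ 2), key]
  field_simp
  ring

lemma IsCAlgebra.c_diag (hA : IsCAlgebra A) (hsym : ∀ r, A.inv r = r) {t u : R}
    (hmixed : A.c u t t = (A.d u * A.d t + ε * q * A.d u) / q ^ 2) :
    A.c t t u = (A.d t * A.d t + ε * q * A.d t) / q ^ 2 := by
  apply mul_left_cancel₀ (hA.d_pos u).ne'
  rw [hA.d_mul_c_of_symm hsym, hA.c_comm hsym, hmixed]
  field_simp

lemma IsCAlgebra.c_triple (hA : IsCAlgebra A) (hsym : ∀ r, A.inv r = r) (hq : q ≠ 0)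
    (hε : ε = -1 ∨ ε = 1) (hD : ∑ v ∈ univ.erase A.e, A.d v = q ^ 2 - 2 * ε * q) {t : R}
    (ht : t ≠ A.e)
    (hdiag : ∀ u, u ≠ A.e → u ≠ t → A.c t t u = (A.d t * A.d t + ε * q * A.d t) / q ^ 2) :
    A.c t t t = (A.d t * A.d t + 3 * ε * q * A.d t + q ^ 2 - ε * q ^ 3) / q ^ 2 := by
  have hC4 := hA.sum_d_mul_c t t
  have hterm : ∀ v ∈ univ.erase A.e, A.d v * A.c t t v
      = A.d v * ((A.d t * A.d t + ε * q * A.d t) / q ^ 2)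
        + if v = t then A.d t * (A.c t t t - (A.d t * A.d t + ε * q * A.d t) / q ^ 2) else 0 := by
    intro v hv
    split_ifs with hvt
    · subst hvt; ring
    · rw [hdiag v (ne_of_mem_erase hv) hvt, add_zero]
  rw [← add_sum_erase _ _ (mem_univ A.e), hA.c_apply_e_of_symm hsym, if_pos rfl, hA.d_e,
    sum_congr rfl hterm, sum_add_distrib, sum_ite_eq', if_pos (mem_erase.2 ⟨ht, mem_univ t⟩),
    ← sum_mul, hD] at hC4
  apply mul_left_cancel₀ (hA.d_pos t).ne'
  field_simp at hC4 ⊢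
  rcases hε with rfl | rfl <;> linear_combination hC4

lemma IsAmorphic.c_eq_amorphicConst (hA : IsCAlgebra A) (hnt : 4 ≤ Fintype.card R)
    (ham : IsAmorphic A) (hq : q ≠ 0) (hε : ε = -1 ∨ ε = 1)
    (hsign : ∀ r s t, r ≠ A.e → s ≠ A.e → t ≠ A.e → r ≠ s → s ≠ t → r ≠ t →
      A.c r s t = A.d r * A.d s / q ^ 2)
    (hD : ∑ v ∈ univ.erase A.e, A.d v = q ^ 2 - 2 * ε * q) :
    A.c = amorphicConst A.e A.d q ε := by
  have hsym := ham.inv_eq_self hA hnt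
  have hmixed : ∀ {t u}, t ≠ A.e → u ≠ A.e → t ≠ u →
      A.c t u u = (A.d t * A.d u + ε * q * A.d t) / q ^ 2 :=
    fun ht hu htu => ham.c_mixed hA hnt hq hsign hD ht hu htu
  have hdiag : ∀ {t u}, t ≠ A.e → u ≠ A.e → t ≠ u →
      A.c t t u = (A.d t * A.d t + ε * q * A.d t) / q ^ 2 :=
    fun ht hu htu => hA.c_diag hsym (hmixed hu ht (Ne.symm htu))
  funext r s t
  unfold amorphicConst
  by_cases hr : r = A.e
  · rw [if_pos hr, hr, hA.c_e_left]
  by_cases hs : s = A.e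
  · rw [if_neg hr, if_pos hs, hs, hA.c_e_right]
  by_cases ht : t = A.e
  · rw [if_neg hr, if_neg hs, if_pos ht, ht, hA.c_apply_e_of_symm hsym]
  rw [if_neg hr, if_neg hs, if_neg ht]
  by_cases hrs : r = s <;> by_cases hrt : r = t
  · subst hrs hrt
    simp only [and_self, if_true]
    rw [hA.c_triple hsym hq hε hD hr fun u hu hur => hdiag hr hu (Ne.symm hur)]
    ring
  · subst hrs
    simp only [hrt, if_true, if_false, and_false]
    rw [hdiag hr ht hrt]
    ring
  · subst hrt
    simp only [hrs, Ne.symm hrs, if_true, if_false, false_and]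
    rw [hA.c_comm hsym, hmixed hs hr (Ne.symm hrs)]
    ring
  · by_cases hst : s = t
    · subst hst
      simp only [hrs, if_true, if_false, false_and]
      rw [hmixed hr hs hrs]
      ring
    · simp only [hrs, hrt, hst, if_false, false_and]
      rw [hsign r s t hr hs ht hrs hst hrt]
      ring

end Rigidity

lemma IsCAlgebra.sum_erase_d_eq_of_sign {R : Type*} [Fintype R] [DecidableEq R]
    {A : CAlgebraData R} {ε : ℝ} (hA : IsCAlgebra A) (hε : ε = -1 ∨ ε = 1) :
    ∑ v ∈ univ.erase A.e, A.d v
      = (Real.sqrt A.degree + ε) ^ 2 - 2 * ε * (Real.sqrt A.degree + ε) := by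
  have hn : 0 ≤ A.degree := sum_nonneg fun r _ => (hA.d_pos r).le
  have h := Real.sq_sqrt hn
  rw [hA.sum_erase_d]
  rcases hε with rfl | rfl <;> linear_combination -h

/-- if `d > 0` is such that `d_r/d ∈ ℕ` for all `r ∈ R^#`, then a nontrivial
amorphic `C`-algebra with sign `ε` is a fusion of a homogeneous amorphic `C`-algebra of
dimension `ν = (n-1)/d + 1`, common degree `d` and the same sign `ε`. -/
theorem stmt_11 {R : Type*} [Fintype R] [DecidableEq R] (A : CAlgebraData R)
    (hA : IsCAlgebra A) (hnt : 4 ≤ Fintype.card R) (ham : IsAmorphic A)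
    (ε : ℝ) (hε : IsSign A ε)
    (d : ℝ) (hd : 0 < d) (hdiv : ∀ r, r ≠ A.e → ∃ k : ℕ, 0 < k ∧ A.d r = k * d) :
    ∃ (R' : Type) (fR' : Fintype R') (dR' : DecidableEq R') (A' : CAlgebraData R')
      (π' : Finset (Finset R')) (φ : R → Finset R'),
      @IsCAlgebra R' fR' dR' A' ∧
      4 ≤ @Fintype.card R' fR' ∧
      @IsAmorphic R' fR' dR' A' ∧
      (@Fintype.card R' fR' : ℝ) = (A.degree - 1) / d + 1 ∧
      (∀ u, u ≠ A'.e → A'.d u = d) ∧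
      @IsSign R' fR' A' ε ∧
      @IsPartition R' fR' π' ∧ ({A'.e} : Finset R') ∈ π' ∧
      (∀ r, φ r ∈ π') ∧ Function.Injective φ ∧ (∀ S ∈ π', ∃ r, φ r = S) ∧
      φ A.e = {A'.e} ∧
      (∀ r, r ≠ A.e → ((φ r).card : ℝ) = A.d r / d) ∧
      (∀ r s t, ∀ w ∈ φ t, A.c r s t = ∑ u ∈ φ r, ∑ v ∈ φ s, A'.c u v w) := by
  obtain ⟨hε1, hqpos, hsign⟩ := hε
  set q := Real.sqrt A.degree + ε with hq
  have hD : ∑ v ∈ univ.erase A.e, A.d v = q ^ 2 - 2 * ε * q := hA.sum_erase_d_eq_of_sign hε1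
  have hqε : ε < q := by
    have hn : 0 < A.degree := sum_pos (fun r _ => hA.d_pos r) ⟨A.e, mem_univ _⟩
    linarith [Real.sqrt_pos.2 hn]
  obtain ⟨N, p, e', hpsurj, hpe, hδ⟩ := exists_fiber_refinement hA.d_e hdiv
  set δ : Fin N → ℝ := fun u => if u = e' then 1 else d
  have hpe' : p e' = A.e := (hpe e').2 rfl
  have hφe : univ.filter (p · = A.e) = {e'} := by ext u; simp [hpe]
  have hδD : ∑ u ∈ univ.erase e', δ u = ∑ r ∈ univ.erase A.e, A.d r := by
    rw [sum_erase_eq_sum_erase_fiber hpe, sum_congr rfl fun r _ => hδ r]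
  have hN : ∑ u ∈ univ.erase e', δ u = ((N : ℝ) - 1) * d := by
    rw [sum_congr rfl fun u hu => if_neg (ne_of_mem_erase hu), sum_const,
      card_erase_of_mem (mem_univ _), card_univ, Fintype.card_fin, nsmul_eq_mul,
      Nat.cast_sub e'.pos, Nat.cast_one]
  refine ⟨Fin N, inferInstance, inferInstance, amorphicAlgebra e' δ q ε,
    univ.image fun r => univ.filter (p · = r), fun r => univ.filter (p · = r),
    isCAlgebra_amorphicAlgebra (fun u => by by_cases hu : u = e' <;> simp [δ, hu, hd])
      (if_pos rfl) hqpos.ne' hqε.ne' hε1 (hδD.trans hD),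
    ?_, isAmorphic_amorphicAlgebra, ?_, fun u hu => if_neg hu,
    isSign_amorphicAlgebra (if_pos rfl) hqpos hqε hε1 (hδD.trans hD),
    isPartition_image_fiber hpsurj, hφe ▸ mem_image_of_mem _ (mem_univ _),
    fun r => mem_image_of_mem _ (mem_univ r), injective_fiber hpsurj,
    fun S hS => by simpa using hS, hφe, fun r hr => ?_, fun r s t w hw => ?_⟩
  · simpa using hnt.trans (Fintype.card_le_of_surjective p hpsurj)
  · have h : ((N : ℝ) - 1) * d = A.degree - 1 := by rw [← hN, hδD, hA.sum_erase_d]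
    rw [Fintype.card_fin, ← h]
    field_simp
    ring
  · have hne : ∀ u ∈ univ.filter (p · = r), u ≠ e' := fun u hu h =>
      hr (by rw [← (mem_filter.1 hu).2, h, hpe'])
    rw [eq_div_iff hd.ne', ← hδ r, sum_congr rfl fun u hu => if_neg (hne u hu), sum_const,
      nsmul_eq_mul]
  · show A.c r s t = ∑ u ∈ _, ∑ v ∈ _, amorphicConst e' δ q ε u v w
    rw [sum_fiber_amorphicConst p (fun u => hpe' ▸ hpe u), hpe', (mem_filter.1 hw).2,
      ham.c_eq_amorphicConst hA hnt hqpos.ne' hε1 hsign hD]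
    simp only [hδ]
end

section
/- Let (R, e, *, d, c) be a nontrivial C-algebra. Then it is homogeneous and amorphic if and only if every bijection g : R → R with g(e) = e is an automorphism, i.e. satisfies c_{g(r),g(s)}^{g(t)} = c_{r,s}^t for all r, s, t ∈ R (equivalently, the automorphism group of the C-algebra is the full symmetric group on R^#). -/
open Finset

lemma aux_compl_nonempty {R : Type*} [Fintype R] [DecidableEq R]
    (h4 : 4 ≤ Fintype.card R) (a b c : R) :
    (Finset.univ \ {a, b, c} : Finset R).Nonempty := by
  rw [Finset.sdiff_nonempty]
  intro h
  have h1 : (Finset.univ : Finset R).card ≤ ({a, b, c} : Finset R).card :=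
    Finset.card_le_card h
  have h2 : ({a, b, c} : Finset R).card ≤ 3 := by
    apply (Finset.card_insert_le _ _).trans
    have := Finset.card_insert_le b ({c} : Finset R)
    simp at this ⊢
    omega
  rw [Finset.card_univ] at h1
  omega

lemma aux_partition {R : Type*} [Fintype R] [DecidableEq R]
    (h4 : 4 ≤ Fintype.card R) (e r s : R) :
    IsPartition ({{e}, {r}, {s}, Finset.univ \ {e, r, s}} : Finset (Finset R)) := by
  constructor
  · intro S hS
    simp only [Finset.mem_insert, Finset.mem_singleton] at hS
    rcases hS with h | h | h | h <;> subst h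
    · exact Finset.singleton_nonempty _
    · exact Finset.singleton_nonempty _
    · exact Finset.singleton_nonempty _
    · exact aux_compl_nonempty h4 e r s
  · intro x
    by_cases hx : x = e ∨ x = r ∨ x = s
    · refine ⟨{x}, ⟨?_, Finset.mem_singleton_self x⟩, ?_⟩
      · simp only [Finset.mem_insert, Finset.mem_singleton]
        rcases hx with h | h | h <;> subst h <;> tauto
      · rintro S ⟨hS, hxS⟩
        simp only [Finset.mem_insert, Finset.mem_singleton] at hS
        rcases hS with h | h | h | h <;> subst h
        · rw [Finset.mem_singleton] at hxS; subst hxS; rfl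
        · rw [Finset.mem_singleton] at hxS; subst hxS; rfl
        · rw [Finset.mem_singleton] at hxS; subst hxS; rfl
        · exfalso
          rw [Finset.mem_sdiff] at hxS
          simp only [Finset.mem_insert, Finset.mem_singleton] at hxS
          exact hxS.2 hx
    · push_neg at hx
      refine ⟨Finset.univ \ {e, r, s}, ⟨?_, ?_⟩, ?_⟩
      · simp
      · simp [hx.1, hx.2.1, hx.2.2]
      · rintro S ⟨hS, hxS⟩
        simp only [Finset.mem_insert, Finset.mem_singleton] at hS
        rcases hS with h | h | h | h <;> subst h
        · rw [Finset.mem_singleton] at hxS; exact absurd hxS hx.1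
        · rw [Finset.mem_singleton] at hxS; exact absurd hxS hx.2.1
        · rw [Finset.mem_singleton] at hxS; exact absurd hxS hx.2.2
        · rfl

/-- a nontrivial `C`-algebra is homogeneous and amorphic iff every
unit-preserving bijection of `R` is an automorphism. -/
theorem stmt_12 {R : Type*} [Fintype R] [DecidableEq R] (A : CAlgebraData R)
    (hA : IsCAlgebra A) (hnt : 4 ≤ Fintype.card R) :
    ((∀ r s, r ≠ A.e → s ≠ A.e → A.d r = A.d s) ∧ IsAmorphic A) ↔
      (∀ g : R → R, Function.Bijective g → g A.e = A.e →
        ∀ r s t, A.c (g r) (g s) (g t) = A.c r s t) := by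
  obtain ⟨hinvE, hinvinv, hdpos, hce, hcre, hassoc, hanti, hC3, hde, hdinv, hC4⟩ := hA
  have hdne : ∀ r, A.d r ≠ 0 := fun r => ne_of_gt (hdpos r)
  constructor
  · rintro ⟨hhom, hamor⟩
    -- the involution is trivial
    have hinv : ∀ r, A.inv r = r := by
      intro r
      by_cases hre : r = A.e
      · rw [hre, hinvE]
      · have hpart := aux_partition hnt A.e r r
        have hcl := (hamor _ hpart (by simp)).1 {r} (by simp)
        rw [Finset.image_singleton] at hcl
        simp only [Finset.mem_insert, Finset.mem_singleton] at hcl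
        rcases hcl with h | h | h | h
        · exfalso
          rw [Finset.singleton_inj] at h
          exact hre (by rw [← hinvinv r, h, hinvE])
        · rwa [Finset.singleton_inj] at h
        · rwa [Finset.singleton_inj] at h
        · exfalso
          have hcard := congrArg Finset.card h
          rw [Finset.card_singleton, Finset.card_sdiff_of_subset (Finset.subset_univ _),
            Finset.card_univ] at hcard
          have hrr : ({A.e, r, r} : Finset R) = {A.e, r} := by
            ext x; simp
          have h3 : ({A.e, r, r} : Finset R).card = 2 := by
            rw [hrr, Finset.card_insert_of_notMem (by simp [Ne.symm hre]), Finset.card_singleton]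
          omega
    have hsym : ∀ r s t, A.c r s t = A.c s r t := by
      intro r s t
      rw [hanti, hinv, hinv, hinv]
    have hcyc : ∀ r s t, r ≠ A.e → t ≠ A.e → A.c r s t = A.c s t r := by
      intro r s t hr ht
      have h := hassoc r s t A.e
      have hl : ∑ v, A.c r s v * A.c v t A.e = A.c r s t * A.d t := by
        rw [Finset.sum_eq_single t]
        · rw [hC3, hinv, if_pos rfl]
        · intro v _ hv
          rw [hC3, hinv, if_neg (Ne.symm hv), mul_zero]
        · simp
      have hrr : ∑ v, A.c r v A.e * A.c s t v = A.d r * A.c s t r := by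
        rw [Finset.sum_eq_single r]
        · rw [hC3, hinv, if_pos rfl]
        · intro v _ hv
          rw [hC3, hinv, if_neg hv, zero_mul]
        · simp
      rw [hl, hrr] at h
      rw [hhom t r ht hr] at h
      exact mul_left_cancel₀ (hdne r) (by linarith)
    have hL4 : ∀ r s u v, r ≠ A.e → s ≠ A.e → u ≠ A.e → u ≠ r → u ≠ s →
        v ≠ A.e → v ≠ r → v ≠ s → A.c r s u = A.c r s v := by
      intro r s u v hr hs hue hur hus hve hvr hvs
      have hpart := aux_partition hnt A.e r s
      have hsum := (hamor _ hpart (by simp)).2 {r} (by simp) {s} (by simp)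
        (Finset.univ \ {A.e, r, s}) (by simp) u (by simp [hue, hur, hus])
        v (by simp [hve, hvr, hvs])
      simpa using hsum
    have hB : ∀ r s t, r ≠ A.e → s ≠ A.e → t ≠ A.e → r ≠ s → t ≠ r → t ≠ s →
        A.c r r s + A.c s s r + (↑(Fintype.card R - 3) : ℝ) * A.c r s t = A.d r := by
      intro r s t hr hs ht hrs htr hts
      have key := hC4 r s
      have huniv : (Finset.univ : Finset R) =
          insert A.e (insert r (insert s (Finset.univ \ {A.e, r, s}))) := by
        ext x; simp; tauto
      rw [huniv, Finset.sum_insert (by simp [Ne.symm hr, Ne.symm hs]),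
        Finset.sum_insert (by simp [hrs]), Finset.sum_insert (by simp)] at key
      rw [hC3, hinv, if_neg (Ne.symm hrs)] at key
      have hsum : ∑ x ∈ Finset.univ \ {A.e, r, s}, A.d x * A.c r s x =
          (↑(Fintype.card R - 3) : ℝ) * (A.d r * A.c r s t) := by
        have h1 : ∀ x ∈ Finset.univ \ {A.e, r, s}, A.d x * A.c r s x = A.d r * A.c r s t := by
          intro x hx
          simp only [Finset.mem_sdiff, Finset.mem_insert, Finset.mem_singleton,
            Finset.mem_univ, true_and] at hx
          push_neg at hx
          rw [hhom x r hx.1 hr, hL4 r s x t hr hs hx.1 hx.2.1 hx.2.2 ht htr hts]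
        rw [Finset.sum_congr rfl h1, Finset.sum_const, nsmul_eq_mul]
        congr 2
        rw [Finset.card_sdiff_of_subset (Finset.subset_univ _), Finset.card_univ]
        congr 1
        rw [Finset.card_insert_of_notMem (by simp [Ne.symm hr, Ne.symm hs]),
          Finset.card_insert_of_notMem (by simp [hrs]), Finset.card_singleton]
      rw [hsum] at key
      have e1 : A.c r s r = A.c r r s := by
        rw [hcyc r s r hr hr, hcyc s r r hs hr]
      have e2 : A.c r s s = A.c s s r := hcyc r s s hr hs
      rw [e1, e2, hhom s r hs hr] at key
      exact mul_left_cancel₀ (hdne r)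
        (show A.d r * (A.c r r s + A.c s s r + (↑(Fintype.card R - 3) : ℝ) * A.c r s t)
          = A.d r * A.d r by linear_combination key)
    have hbswap : ∀ a b, a ≠ A.e → b ≠ A.e → a ≠ b → A.c a a b = A.c b b a := by
      intro a b ha hb hab
      obtain ⟨u, hu⟩ := aux_compl_nonempty hnt A.e a b
      simp only [Finset.mem_sdiff, Finset.mem_insert, Finset.mem_singleton,
        Finset.mem_univ, true_and] at hu
      push_neg at hu
      obtain ⟨hue, hua, hub⟩ := hu
      have e1 := hB a u b ha hue hb (Ne.symm hua) (Ne.symm hab) (Ne.symm hub)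
      have e2 := hB b u a hb hue ha (Ne.symm hub) hab (Ne.symm hua)
      have e3 : A.c u u a = A.c u u b :=
        hL4 u u a b hue hue ha (Ne.symm hua) (Ne.symm hua) hb (Ne.symm hub) (Ne.symm hub)
      have e4 : A.c a u b = A.c b u a := by
        rw [hcyc a u b ha hb, hsym u b a]
      have e5 : A.d a = A.d b := hhom a b ha hb
      have e6 : A.c a a u = A.c b b u := by
        linear_combination e1 - e2 - e3 - (↑(Fintype.card R - 3) : ℝ) * e4 + e5
      calc A.c a a b = A.c a a u :=
            hL4 a a b u ha ha hb (Ne.symm hab) (Ne.symm hab) hue hua hua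
        _ = A.c b b u := e6
        _ = A.c b b a :=
            hL4 b b u a hb hb hue hub hub ha hab hab
    have hbeta : ∀ a b a' b', a ≠ A.e → b ≠ A.e → a' ≠ A.e → b' ≠ A.e → a ≠ b → a' ≠ b' →
        A.c a a b = A.c a' a' b' := by
      intro a b a' b' ha hb ha' hb' hab hab'
      by_cases h : a = a'
      · subst h
        exact hL4 a a b b' ha ha hb (Ne.symm hab) (Ne.symm hab) hb' (Ne.symm hab') (Ne.symm hab')
      · calc A.c a a b = A.c a a a' :=
              hL4 a a b a' ha ha hb (Ne.symm hab) (Ne.symm hab) ha' (Ne.symm h) (Ne.symm h)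
          _ = A.c a' a' a := hbswap a a' ha ha' h
          _ = A.c a' a' b' :=
              hL4 a' a' a b' ha' ha' ha h h hb' (Ne.symm hab') (Ne.symm hab')
    have hdelta : ∀ r s t r' s' t', r ≠ A.e → s ≠ A.e → t ≠ A.e →
        r' ≠ A.e → s' ≠ A.e → t' ≠ A.e → r ≠ s → t ≠ r → t ≠ s →
        r' ≠ s' → t' ≠ r' → t' ≠ s' → A.c r s t = A.c r' s' t' := by
      intro r s t r' s' t' hr hs ht hr' hs' ht' hrs htr hts hrs' htr' hts'
      have e1 := hB r s t hr hs ht hrs htr hts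
      have e2 := hB r' s' t' hr' hs' ht' hrs' htr' hts'
      have e3 : A.c r r s = A.c r' r' s' := hbeta r s r' s' hr hs hr' hs' hrs hrs'
      have e4 : A.c s s r = A.c s' s' r' :=
        hbeta s r s' r' hs hr hs' hr' (Ne.symm hrs) (Ne.symm hrs')
      have e5 : A.d r = A.d r' := hhom r r' hr hr'
      have hn : (↑(Fintype.card R - 3) : ℝ) ≠ 0 := by
        have : Fintype.card R - 3 ≠ 0 := by omega
        exact_mod_cast this
      exact mul_left_cancel₀ hn (by linear_combination e1 - e2 - e3 - e4 + e5)
    have halpha : ∀ a a', a ≠ A.e → a' ≠ A.e → A.c a a a = A.c a' a' a' := by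
      intro a a' ha ha'
      have hEa : ∀ b w, b ≠ A.e → w ≠ A.e → w ≠ b →
          A.d b + A.d b * A.c b b b +
            (↑(Fintype.card R - 2) : ℝ) * (A.d b * A.c b b w) = A.d b * A.d b := by
        intro b w hb hwe hwb
        have key := hC4 b b
        have huniv : (Finset.univ : Finset R) =
            insert A.e (insert b (Finset.univ \ {A.e, b})) := by
          ext x; simp; tauto
        rw [huniv, Finset.sum_insert (by simp [Ne.symm hb]), Finset.sum_insert (by simp)] at key
        rw [hC3, hinv, if_pos rfl, hde] at key
        have hsum : ∑ x ∈ Finset.univ \ {A.e, b}, A.d x * A.c b b x =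
            (↑(Fintype.card R - 2) : ℝ) * (A.d b * A.c b b w) := by
          have h1 : ∀ x ∈ Finset.univ \ {A.e, b}, A.d x * A.c b b x = A.d b * A.c b b w := by
            intro x hx
            simp only [Finset.mem_sdiff, Finset.mem_insert, Finset.mem_singleton,
              Finset.mem_univ, true_and] at hx
            push_neg at hx
            rw [hhom x b hx.1 hb, hL4 b b x w hb hb hx.1 hx.2 hx.2 hwe hwb hwb]
          rw [Finset.sum_congr rfl h1, Finset.sum_const, nsmul_eq_mul]
          congr 2
          rw [Finset.card_sdiff_of_subset (Finset.subset_univ _), Finset.card_univ,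
            Finset.card_insert_of_notMem (by simp [Ne.symm hb]), Finset.card_singleton]
        rw [hsum] at key
        linear_combination key
      obtain ⟨w, hw⟩ := aux_compl_nonempty hnt A.e a a
      simp only [Finset.mem_sdiff, Finset.mem_insert, Finset.mem_singleton,
        Finset.mem_univ, true_and] at hw
      push_neg at hw
      obtain ⟨w', hw'⟩ := aux_compl_nonempty hnt A.e a' a'
      simp only [Finset.mem_sdiff, Finset.mem_insert, Finset.mem_singleton,
        Finset.mem_univ, true_and] at hw'
      push_neg at hw'
      have e1 := hEa a w ha hw.1 hw.2.1
      have e2 := hEa a' w' ha' hw'.1 hw'.2.1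
      have e3 : A.c a a w = A.c a' a' w' :=
        hbeta a w a' w' ha hw.1 ha' hw'.1 (Ne.symm hw.2.1) (Ne.symm hw'.2.1)
      have e5 : A.d a = A.d a' := hhom a a' ha ha'
      rw [← e5, ← e3] at e2
      exact mul_left_cancel₀ (hdne a) (by linear_combination e1 - e2)
    intro g hgb hge r s t
    have hgne : ∀ x, x ≠ A.e → g x ≠ A.e := fun x hx h => hx (hgb.1 (h.trans hge.symm))
    have hginj : ∀ x y : R, g x = g y ↔ x = y :=
      fun x y => ⟨fun h => hgb.1 h, fun h => by rw [h]⟩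
    by_cases hr : r = A.e
    · subst hr
      rw [hge, hce, hce]
      by_cases hst : s = t
      · simp [hst]
      · rw [if_neg hst, if_neg (fun h => hst ((hginj s t).mp h))]
    · by_cases hs : s = A.e
      · subst hs
        rw [hge, hcre, hcre]
        by_cases hrt : r = t
        · simp [hrt]
        · rw [if_neg hrt, if_neg (fun h => hrt ((hginj r t).mp h))]
      · by_cases ht : t = A.e
        · subst ht
          rw [hge, hC3, hC3, hinv, hinv]
          by_cases hsr : s = r
          · rw [if_pos hsr, if_pos (by rw [hsr]), hhom (g r) r (hgne r hr) hr]
          · rw [if_neg hsr, if_neg (fun h => hsr ((hginj s r).mp h))]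
        · have hgr := hgne r hr
          have hgs := hgne s hs
          have hgt := hgne t ht
          by_cases h1 : r = s
          · subst h1
            by_cases h2 : r = t
            · subst h2
              exact halpha (g r) r hgr hr
            · exact hbeta (g r) (g t) r t hgr hgt hr ht
                (fun h => h2 ((hginj r t).mp h)) h2
          · by_cases h2 : s = t
            · subst h2
              rw [hcyc (g r) (g s) (g s) hgr hgs, hcyc r s s hr hs]
              exact hbeta (g s) (g r) s r hgs hgr hs hr
                (fun h => h1 (((hginj s r).mp h).symm)) (Ne.symm h1)
            · by_cases h3 : r = t
              · subst h3
                have k1 : A.c (g r) (g s) (g r) = A.c (g r) (g r) (g s) := by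
                  rw [hcyc (g r) (g s) (g r) hgr hgr, hcyc (g s) (g r) (g r) hgs hgr]
                have k2 : A.c r s r = A.c r r s := by
                  rw [hcyc r s r hr hr, hcyc s r r hs hr]
                rw [k1, k2]
                exact hbeta (g r) (g s) r s hgr hgs hr hs
                  (fun h => h1 ((hginj r s).mp h)) h1
              · exact hdelta (g r) (g s) (g t) r s t hgr hgs hgt hr hs ht
                  (fun h => h1 ((hginj r s).mp h))
                  (fun h => h3 (((hginj t r).mp h).symm))
                  (fun h => h2 (((hginj t s).mp h).symm))
                  h1 (fun h => h3 h.symm) (fun h => h2 h.symm)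
  · intro hg
    have hkey : ∀ g : R → R, Function.Bijective g → g A.e = A.e →
        ∀ r, g (A.inv r) = A.inv (g r) ∧ A.d (g r) = A.d r := by
      intro g hb he r
      have h := hg g hb he r (A.inv r) A.e
      rw [he, hC3, hC3, if_pos rfl] at h
      by_cases hcs : g (A.inv r) = A.inv (g r)
      · rw [if_pos hcs] at h
        exact ⟨hcs, h⟩
      · rw [if_neg hcs] at h
        exact absurd h.symm (hdne r)
    have hinv : ∀ r, A.inv r = r := by
      intro r
      by_cases hre : r = A.e
      · rw [hre, hinvE]
      · by_contra hne
        have h1 : A.inv r ≠ A.e := fun h => hre (by rw [← hinvinv r, h, hinvE])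
        obtain ⟨u, hu⟩ := aux_compl_nonempty hnt A.e r (A.inv r)
        simp only [Finset.mem_sdiff, Finset.mem_insert, Finset.mem_singleton,
          Finset.mem_univ, true_and] at hu
        push_neg at hu
        obtain ⟨hue, hur, hui⟩ := hu
        have hge : Equiv.swap (A.inv r) u A.e = A.e :=
          Equiv.swap_apply_of_ne_of_ne (Ne.symm h1) (Ne.symm hue)
        have hgr : Equiv.swap (A.inv r) u r = r :=
          Equiv.swap_apply_of_ne_of_ne (fun h => hne h.symm) (Ne.symm hur)
        have h2 := (hkey (Equiv.swap (A.inv r) u) (Equiv.swap (A.inv r) u).bijective hge r).1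
        rw [Equiv.swap_apply_left, hgr] at h2
        exact hui h2
    refine ⟨?_, ?_⟩
    · intro r s hr hs
      by_cases hrs : r = s
      · rw [hrs]
      · have hge : Equiv.swap r s A.e = A.e :=
          Equiv.swap_apply_of_ne_of_ne (Ne.symm hr) (Ne.symm hs)
        have h := (hkey (Equiv.swap r s) (Equiv.swap r s).bijective hge r).2
        rw [Equiv.swap_apply_left] at h
        exact h.symm
    · intro π hπ hmemE
      have hdisj : ∀ S ∈ π, ∀ T ∈ π, ∀ x : R, x ∈ S → x ∈ T → S = T := by
        intro S hS T hT x hxS hxT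
        obtain ⟨W, _, hW⟩ := hπ.2 x
        rw [hW S ⟨hS, hxS⟩, hW T ⟨hT, hxT⟩]
      constructor
      · intro S hS
        have himg : S.image A.inv = S := by
          ext x
          simp only [Finset.mem_image]
          constructor
          · rintro ⟨y, hy, rfl⟩; rwa [hinv]
          · intro hx; exact ⟨x, hx, hinv x⟩
        rwa [himg]
      · intro S hS T hT U hU u hu v hv
        by_cases huv : u = v
        · rw [huv]
        · have hue : u ≠ A.e := by
            intro h; subst h
            have hUe : U = {A.e} := hdisj U hU {A.e} hmemE A.e hu (Finset.mem_singleton_self _)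
            rw [hUe, Finset.mem_singleton] at hv
            exact huv hv.symm
          have hve : v ≠ A.e := by
            intro h; subst h
            have hUe : U = {A.e} := hdisj U hU {A.e} hmemE A.e hv (Finset.mem_singleton_self _)
            rw [hUe, Finset.mem_singleton] at hu
            exact huv hu
          have hσe : Equiv.swap u v A.e = A.e :=
            Equiv.swap_apply_of_ne_of_ne (Ne.symm hue) (Ne.symm hve)
          have hstab : ∀ W ∈ π, ∀ x ∈ W, Equiv.swap u v x ∈ W := by
            intro W hW x hxW
            by_cases hxu : x = u
            · subst hxu
              rw [Equiv.swap_apply_left]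
              rw [hdisj W hW U hU x hxW hu]
              exact hv
            · by_cases hxv : x = v
              · subst hxv
                rw [Equiv.swap_apply_right]
                rw [hdisj W hW U hU x hxW hv]
                exact hu
              · rw [Equiv.swap_apply_of_ne_of_ne hxu hxv]
                exact hxW
          have hre : ∀ W : Finset R, (∀ x ∈ W, Equiv.swap u v x ∈ W) → ∀ F : R → ℝ,
              ∑ x ∈ W, F (Equiv.swap u v x) = ∑ x ∈ W, F x := by
            intro W hW F
            apply Finset.sum_equiv (Equiv.swap u v)
            · intro i
              constructor
              · exact hW i
              · intro h
                have h' := hW _ h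
                rwa [Equiv.swap_apply_self] at h'
            · intro i _; rfl
          calc ∑ r ∈ S, ∑ s ∈ T, A.c r s u
              = ∑ r ∈ S, ∑ s ∈ T, A.c (Equiv.swap u v r) (Equiv.swap u v s) (Equiv.swap u v u) := by
                refine Finset.sum_congr rfl fun a _ => Finset.sum_congr rfl fun b _ => ?_
                rw [hg (Equiv.swap u v) (Equiv.swap u v).bijective hσe]
            _ = ∑ r ∈ S, ∑ s ∈ T, A.c (Equiv.swap u v r) (Equiv.swap u v s) v := by
                rw [Equiv.swap_apply_left]
            _ = ∑ r ∈ S, ∑ s ∈ T, A.c (Equiv.swap u v r) s v :=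
                Finset.sum_congr rfl fun a _ => hre T (hstab T hT) (fun y => A.c (Equiv.swap u v a) y v)
            _ = ∑ r ∈ S, ∑ s ∈ T, A.c r s v :=
                hre S (hstab S hS) (fun x => ∑ s ∈ T, A.c x s v)
end

section
/- Let (R, e, *, d, c) be a nontrivial amorphic homogeneous C-algebra of degree n with common degree d (so d_r = d for all r ∈ R^#) and with sign ε, and suppose d = √n + ε (i.e. the algebra is generalized affine). Then for all r, s, t ∈ R^#: c_{r,s}^t = 1 if r, s, t are pairwise distinct; c_{r,s}^t = ε + 1 if exactly two of r, s, t coincide; and c_{r,r}^r = ε·(3 − √n) + 1. -/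
open Finset

section Aux
variable {R : Type*} [Fintype R] [DecidableEq R]

lemma part_aux (e r : R) (hr : r ≠ e) (h4 : 4 ≤ Fintype.card R) :
    IsPartition ({{e}, {r}, Finset.univ \ {e, r}} : Finset (Finset R)) := by
  have hK : ¬ (Finset.univ : Finset R) ⊆ {e, r} := by
    intro hsub
    have h1 := Finset.card_le_card hsub
    have h2 : ({e, r} : Finset R).card ≤ 2 :=
      (Finset.card_insert_le _ _).trans (by simp)
    rw [Finset.card_univ] at h1
    omega
  constructor
  · intro S hS
    simp only [Finset.mem_insert, Finset.mem_singleton] at hS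
    rcases hS with rfl | rfl | rfl
    · exact ⟨e, by simp⟩
    · exact ⟨r, by simp⟩
    · exact Finset.sdiff_nonempty.mpr hK
  · intro x
    by_cases hxe : x = e
    · subst hxe
      refine ⟨{x}, ⟨by simp, by simp⟩, ?_⟩
      rintro S ⟨hS, hxS⟩
      simp only [Finset.mem_insert, Finset.mem_singleton] at hS
      rcases hS with rfl | rfl | rfl
      · rfl
      · simp only [Finset.mem_singleton] at hxS
        exact absurd hxS.symm hr
      · simp at hxS
    by_cases hxr : x = r
    · subst hxr
      refine ⟨{x}, ⟨by simp, by simp⟩, ?_⟩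
      rintro S ⟨hS, hxS⟩
      simp only [Finset.mem_insert, Finset.mem_singleton] at hS
      rcases hS with rfl | rfl | rfl
      · simp only [Finset.mem_singleton] at hxS
        exact absurd hxS hxe
      · rfl
      · simp at hxS
    · refine ⟨Finset.univ \ {e, r}, ⟨by simp, by simp [hxe, hxr]⟩, ?_⟩
      rintro S ⟨hS, hxS⟩
      simp only [Finset.mem_insert, Finset.mem_singleton] at hS
      rcases hS with rfl | rfl | rfl
      · simp only [Finset.mem_singleton] at hxS; exact absurd hxS hxe
      · simp only [Finset.mem_singleton] at hxS; exact absurd hxS hxr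
      · rfl

end Aux

/-- structure constants of a generalized affine `C`-algebra, i.e. a
nontrivial amorphic homogeneous `C`-algebra whose common degree is `√n + ε`. -/
theorem stmt_13 {R : Type*} [Fintype R] [DecidableEq R] (A : CAlgebraData R)
    (hA : IsCAlgebra A) (hnt : 4 ≤ Fintype.card R) (ham : IsAmorphic A)
    (dd : ℝ) (hhom : ∀ r, r ≠ A.e → A.d r = dd)
    (ε : ℝ) (hε : IsSign A ε) (hgen : dd = Real.sqrt A.degree + ε) :
    ∀ r s t, r ≠ A.e → s ≠ A.e → t ≠ A.e →
      (({r, s, t} : Finset R).card = 3 → A.c r s t = 1) ∧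
      (({r, s, t} : Finset R).card = 2 → A.c r s t = ε + 1) ∧
      (({r, s, t} : Finset R).card = 1 → A.c r s t = ε * (3 - Real.sqrt A.degree) + 1) := by
  obtain ⟨hie, hinv, hd, hce, hcr, hassoc, hanti, hC3, hde, hdinv, hC4⟩ := hA
  obtain ⟨hεpm, hεpos, hsign⟩ := hε
  have hε2 : ε * ε = 1 := by rcases hεpm with rfl | rfl <;> norm_num
  set K : Finset R := Finset.univ.erase A.e with hKdef
  have hmK : K.card + 1 = Fintype.card R := by
    rw [hKdef, Finset.card_erase_of_mem (Finset.mem_univ _), Finset.card_univ]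
    omega
  -- symmetry of the involution
  have hsym : ∀ r, A.inv r = r := by
    intro r
    by_cases hr : r = A.e
    · subst hr; exact hie
    · have hpart := part_aux A.e r hr hnt
      have h1 := (ham _ hpart (by simp)).1 {r} (by simp)
      rw [Finset.image_singleton] at h1
      simp only [Finset.mem_insert, Finset.mem_singleton] at h1
      rcases h1 with h1 | h1 | h1
      · exfalso
        have h2 : A.inv r = A.e := by
          have := Finset.mem_singleton.mp (h1 ▸ Finset.mem_singleton_self (A.inv r))
          exact this
        have : r = A.e := by rw [← hinv r, h2, hie]
        exact hr this
      · exact Finset.singleton_injective h1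
      · exfalso
        have hc1 : ({A.inv r} : Finset R).card = 1 := Finset.card_singleton _
        rw [h1] at hc1
        have hsub : ({A.e, r} : Finset R) ⊆ Finset.univ := Finset.subset_univ _
        rw [Finset.card_sdiff_of_subset hsub, Finset.card_univ,
          Finset.card_insert_of_notMem (by simp [Ne.symm hr]),
          Finset.card_singleton] at hc1
        omega
  have hcomm : ∀ r s t, A.c r s t = A.c s r t := by
    intro r s t; rw [hanti r s t, hsym, hsym, hsym]
  have hdd_pos : 0 < dd := by
    obtain ⟨r, hr⟩ := Fintype.exists_ne_of_one_lt_card (by omega) A.e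
    rw [← hhom r hr]; exact hd r
  have hdeg_pos : 0 < A.degree :=
    Finset.sum_pos (fun i _ => hd i) ⟨A.e, Finset.mem_univ _⟩
  have hdeg : A.degree = 1 + (K.card : ℝ) * dd := by
    rw [CAlgebraData.degree, ← Finset.add_sum_erase _ _ (Finset.mem_univ A.e), hde]
    congr 1
    rw [Finset.sum_congr rfl (fun t ht => hhom t (Finset.ne_of_mem_erase ht)),
      Finset.sum_const, nsmul_eq_mul]
  have hsqrt : Real.sqrt A.degree = dd - ε := by rw [hgen]; ring
  have hsq : A.degree = (dd - ε) ^ 2 := by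
    rw [← hsqrt]; exact (Real.sq_sqrt hdeg_pos.le).symm
  have hm : (K.card : ℝ) = dd - 2 * ε := by
    have h1 : (K.card : ℝ) * dd = (dd - 2 * ε) * dd := by
      linear_combination hsq - hdeg + hε2
    exact mul_right_cancel₀ (ne_of_gt hdd_pos) h1
  -- pairwise distinct case
  have hone : ∀ r s t, r ≠ A.e → s ≠ A.e → t ≠ A.e → r ≠ s → s ≠ t → r ≠ t →
      A.c r s t = 1 := by
    intro r s t hr hs ht hrs hst hrt
    rw [hsign r s t hr hs ht hrs hst hrt, hhom r hr, hhom s hs, ← hgen,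
      div_eq_one_iff_eq (pow_ne_zero _ hdd_pos.ne')]
    ring
  -- cyclic symmetry
  have hcyc0 : ∀ r s t, A.c r s t * A.d t = A.d r * A.c s t r := by
    intro r s t
    have h := hassoc r s t A.e
    simp only [hC3, hsym, mul_ite, mul_zero, ite_mul, zero_mul,
      Finset.sum_ite_eq, Finset.sum_ite_eq', Finset.mem_univ, if_true] at h
    exact h
  have hcyc : ∀ r s t, r ≠ A.e → t ≠ A.e → A.c r s t = A.c s t r := by
    intro r s t hr ht
    have h := hcyc0 r s t
    rw [hhom t ht, hhom r hr] at h
    have h2 : A.c r s t * dd = A.c s t r * dd := by linear_combination h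
    exact mul_right_cancel₀ hdd_pos.ne' h2
  -- row sums
  have hrow : ∀ r s, r ≠ A.e → s ≠ A.e →
      ∑ t ∈ K, A.c r s t = dd - (if s = r then 1 else 0) := by
    intro r s hr hs
    have h := hC4 r s
    rw [← Finset.add_sum_erase _ _ (Finset.mem_univ A.e), hde, one_mul, hC3, hsym] at h
    have h2 : ∑ t ∈ Finset.univ.erase A.e, A.d t * A.c r s t
        = dd * ∑ t ∈ K, A.c r s t := by
      rw [Finset.mul_sum]
      exact Finset.sum_congr rfl fun t ht => by
        rw [hhom t (Finset.ne_of_mem_erase ht)]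
    rw [h2, hhom r hr, hhom s hs] at h
    have h3 : dd * (∑ t ∈ K, A.c r s t) = dd * (dd - (if s = r then 1 else 0)) := by
      by_cases hsr : s = r
      · rw [if_pos hsr] at h ⊢; linear_combination h
      · rw [if_neg hsr] at h ⊢; linear_combination h
    exact mul_left_cancel₀ hdd_pos.ne' h3
  have hmemK : ∀ r, r ≠ A.e → r ∈ K := fun r hr =>
    Finset.mem_erase.mpr ⟨hr, Finset.mem_univ r⟩
  -- sum of the two "mixed" constants
  have hgsum : ∀ r s, r ≠ A.e → s ≠ A.e → r ≠ s →
      A.c r s r + A.c r s s = 2 * ε + 2 := by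
    intro r s hr hs hrs
    have h := hrow r s hr hs
    rw [if_neg (Ne.symm hrs)] at h
    have hrK : r ∈ K := hmemK r hr
    have hsK' : s ∈ K.erase r := Finset.mem_erase.mpr ⟨Ne.symm hrs, hmemK s hs⟩
    rw [← Finset.add_sum_erase _ _ hrK, ← Finset.add_sum_erase _ _ hsK'] at h
    have hval : ∀ t ∈ (K.erase r).erase s, A.c r s t = 1 := by
      intro t ht
      have h1 := Finset.mem_erase.mp ht
      have h2 := Finset.mem_erase.mp h1.2
      have h3 := Finset.mem_erase.mp h2.2
      exact hone r s t hr hs h3.1 hrs (Ne.symm h1.1) (Ne.symm h2.1)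
    rw [Finset.sum_congr rfl hval, Finset.sum_const, nsmul_eq_mul, mul_one,
      Finset.card_erase_of_mem hsK', Finset.card_erase_of_mem hrK,
      Nat.cast_sub (by omega), Nat.cast_sub (by omega)] at h
    push_cast at h
    linarith [hm]
  -- constancy from amorphy, first form
  have hconst1 : ∀ r u v, r ≠ A.e → u ≠ A.e → v ≠ A.e → u ≠ r → v ≠ r →
      A.c r r u = A.c r r v := by
    intro r u v hr hu hv hur hvr
    have hpart := part_aux A.e r hr hnt
    have h2 := (ham _ hpart (by simp)).2 {r} (by simp) {r} (by simp)
      (Finset.univ \ {A.e, r}) (by simp) u (by simp [hu, hur]) v (by simp [hv, hvr])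
    simpa using h2
  -- constancy from amorphy, second form
  have hconst2 : ∀ r u v, r ≠ A.e → u ≠ A.e → v ≠ A.e → u ≠ r → v ≠ r →
      A.c u u r = A.c v v r := by
    intro r u v hr hu hv hur hvr
    have hpart := part_aux A.e r hr hnt
    have h2 := (ham _ hpart (by simp)).2 {r} (by simp) (Finset.univ \ {A.e, r}) (by simp)
      (Finset.univ \ {A.e, r}) (by simp) u (by simp [hu, hur]) v (by simp [hv, hvr])
    simp only [Finset.sum_singleton] at h2
    have heval : ∀ w, w ≠ A.e → w ≠ r →
        ∑ s ∈ Finset.univ \ {A.e, r}, A.c r s w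
          = A.c r w w + (((Finset.univ \ ({A.e, r} : Finset R)).card : ℝ) - 1) := by
      intro w hw hwr
      have hwmem : w ∈ Finset.univ \ ({A.e, r} : Finset R) := by simp [hw, hwr]
      rw [← Finset.add_sum_erase _ _ hwmem]
      congr 1
      have hval : ∀ s ∈ (Finset.univ \ ({A.e, r} : Finset R)).erase w, A.c r s w = 1 := by
        intro s hs
        have hsw : s ≠ w := (Finset.mem_erase.mp hs).1
        have hs2 := (Finset.mem_erase.mp hs).2
        rw [Finset.mem_sdiff, Finset.mem_insert, Finset.mem_singleton] at hs2
        push_neg at hs2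
        exact hone r s w hr hs2.2.1 hw (Ne.symm hs2.2.2) hsw (Ne.symm hwr)
      rw [Finset.sum_congr rfl hval, Finset.sum_const, nsmul_eq_mul, mul_one,
        Finset.card_erase_of_mem hwmem,
        Nat.cast_sub (Finset.card_pos.mpr ⟨w, hwmem⟩)]
      push_cast
      ring
    rw [heval u hu hur, heval v hv hvr] at h2
    have h5 : A.c r u u = A.c r v v := by linarith
    rw [← hcyc r u u hr hu, ← hcyc r v v hr hv]
    exact h5
  -- the two-equal case
  have hg : ∀ r s, r ≠ A.e → s ≠ A.e → r ≠ s → A.c r r s = ε + 1 := by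
    intro r s hr hs hrs
    have hnsub : ¬ (Finset.univ : Finset R) ⊆ {A.e, r, s} := by
      intro hsub
      have h1 := Finset.card_le_card hsub
      have h2 : ({A.e, r, s} : Finset R).card ≤ 3 := by
        apply (Finset.card_insert_le _ _).trans
        have h3 := Finset.card_insert_le r ({s} : Finset R)
        simp only [Finset.card_singleton] at h3
        omega
      rw [Finset.card_univ] at h1
      omega
    obtain ⟨t, ht⟩ := Finset.sdiff_nonempty.mpr hnsub
    rw [Finset.mem_sdiff, Finset.mem_insert, Finset.mem_insert,
      Finset.mem_singleton] at ht
    push_neg at ht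
    obtain ⟨-, hte, htr, hts⟩ := ht
    have e1 : A.c r r s = A.c r r t := hconst1 r s t hr hs hte (Ne.symm hrs) htr
    have e2 : A.c r r t = A.c s s t := hconst2 t r s hte hr hs (Ne.symm htr) (Ne.symm hts)
    have e3 : A.c s s t = A.c s s r := hconst1 s t r hs hte hr hts hrs
    have hsum := hgsum r s hr hs hrs
    have e4 : A.c r s r = A.c r r s := (hcyc r r s hr hs).symm
    have e5 : A.c r s s = A.c s s r := hcyc r s s hr hs
    linarith
  -- the diagonal case
  have hγ : ∀ r, r ≠ A.e → A.c r r r = ε * (3 - Real.sqrt A.degree) + 1 := by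
    intro r hr
    have h := hrow r r hr hr
    rw [if_pos rfl] at h
    have hrK : r ∈ K := hmemK r hr
    rw [← Finset.add_sum_erase _ _ hrK] at h
    have hval : ∀ t ∈ K.erase r, A.c r r t = ε + 1 := by
      intro t ht
      have h1 := Finset.mem_erase.mp ht
      have h2 := Finset.mem_erase.mp h1.2
      exact hg r t hr h2.1 (Ne.symm h1.1)
    rw [Finset.sum_congr rfl hval, Finset.sum_const, nsmul_eq_mul,
      Finset.card_erase_of_mem hrK, Nat.cast_sub (by omega)] at h
    push_cast at h
    rw [hsqrt]
    linear_combination h - (ε + 1) * hm + hε2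
  -- assemble
  intro r s t hr hs ht
  by_cases hrs : r = s
  · subst hrs
    by_cases hrt : r = t
    · subst hrt
      have hcard : ({r, r, r} : Finset R).card = 1 := by simp
      refine ⟨fun h => ?_, fun h => ?_, fun _ => hγ r hr⟩
      · rw [hcard] at h; norm_num at h
      · rw [hcard] at h; norm_num at h
    · have hcard : ({r, r, t} : Finset R).card = 2 := by
        rw [Finset.insert_idem, Finset.card_insert_of_notMem (by simp [hrt]),
          Finset.card_singleton]
      refine ⟨fun h => ?_, fun _ => hg r t hr ht hrt, fun h => ?_⟩
      · rw [hcard] at h; norm_num at h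
      · rw [hcard] at h; norm_num at h
  · by_cases hst : s = t
    · subst hst
      have hcard : ({r, s, s} : Finset R).card = 2 := by
        rw [Finset.insert_eq_self.mpr (Finset.mem_singleton_self s),
          Finset.card_insert_of_notMem (by simp [hrs]), Finset.card_singleton]
      refine ⟨fun h => ?_, fun _ => ?_, fun h => ?_⟩
      · rw [hcard] at h; norm_num at h
      · rw [hcyc r s s hr hs]; exact hg s r hs hr (Ne.symm hrs)
      · rw [hcard] at h; norm_num at h
    · by_cases hrt : r = t
      · subst hrt
        have hcard : ({r, s, r} : Finset R).card = 2 := by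
          rw [Finset.insert_eq_self.mpr (by simp : r ∈ ({s, r} : Finset R)),
            Finset.card_insert_of_notMem (by simp [hst]),
            Finset.card_singleton]
        refine ⟨fun h => ?_, fun _ => ?_, fun h => ?_⟩
        · rw [hcard] at h; norm_num at h
        · rw [← hcyc r r s hr hs]; exact hg r s hr hs hrs
        · rw [hcard] at h; norm_num at h
      · have hcard : ({r, s, t} : Finset R).card = 3 := by
          rw [Finset.card_insert_of_notMem (by simp [hrs, hrt]),
            Finset.card_insert_of_notMem (by simp [hst]), Finset.card_singleton]
        refine ⟨fun _ => hone r s t hr hs ht hrs hst hrt, fun h => ?_, fun h => ?_⟩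
        · rw [hcard] at h; norm_num at h
        · rw [hcard] at h; norm_num at h
end

section
/- Let ν ≥ 4 be an integer, let d > 0 be a real number, let ε ∈ {−1, 1}, and set n = 1 + (ν − 1)d and Q = (√n + ε)². Then the three real numbers d²/Q, (d/2)·(1 + (2d − n + 1)/Q), and ((d − n + 1)/2)·(1 + (2d − n + 1)/Q) + d − 1 (which are the structure constants c_{r,s}^t of the homogeneous amorphic C-algebra of dimension ν, common degree d and sign ε, according to whether |{r,s,t}| equals 3, 2 or 1 for r,s,t ∈ R^#) are all nonnegative if and only if both d ≥ (n − 1 − Q)/2 and 2d² − 3d(n − 1 − Q) + (n − 1)² − (n + 1)Q ≥ 0 hold. Moreover (n − 1 − Q)/2 = −(1 + ε√n). -/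
open Finset

/-- the structure constants of the homogeneous amorphic `C`-algebra of
dimension `ν`, common degree `d` and sign `ε` are all nonnegative iff two explicit
inequalities on `d` hold; moreover `(n - 1 - Q)/2 = -(1 + ε√n)`. -/
theorem stmt_14 (ν : ℤ) (hν : 4 ≤ ν) (d ε : ℝ) (hd : 0 < d) (hε : ε = -1 ∨ ε = 1) :
    let n : ℝ := 1 + ((ν : ℝ) - 1) * d
    let Q : ℝ := (Real.sqrt n + ε) ^ 2
    ((0 ≤ d ^ 2 / Q ∧
        0 ≤ d / 2 * (1 + (2 * d - n + 1) / Q) ∧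
        0 ≤ (d - n + 1) / 2 * (1 + (2 * d - n + 1) / Q) + d - 1) ↔
      ((n - 1 - Q) / 2 ≤ d ∧
        0 ≤ 2 * d ^ 2 - 3 * d * (n - 1 - Q) + (n - 1) ^ 2 - (n + 1) * Q)) ∧
    (n - 1 - Q) / 2 = -(1 + ε * Real.sqrt n) := by
  intro n Q
  have hn : (1:ℝ) < n := by
    have h4 : (4:ℝ) ≤ (ν : ℝ) := by exact_mod_cast hν
    have : (0:ℝ) < ((ν : ℝ) - 1) * d := by nlinarith
    simp only [n]; linarith
  have hn0 : (0:ℝ) ≤ n := by linarith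
  have hsn : 1 < Real.sqrt n := by
    rw [show (1:ℝ) = Real.sqrt 1 by simp]
    exact Real.sqrt_lt_sqrt (by norm_num) hn
  have hse : 0 < Real.sqrt n + ε := by rcases hε with h | h <;> rw [h] <;> linarith
  have hQ0 : (0:ℝ) < Q := pow_pos hse 2
  have hQne : Q ≠ 0 := ne_of_gt hQ0
  have hε2 : ε ^ 2 = 1 := by rcases hε with h | h <;> rw [h] <;> norm_num
  have hs2 : Real.sqrt n ^ 2 = n := Real.sq_sqrt hn0
  have hQeq : Q = n + 1 + 2 * (ε * Real.sqrt n) := by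
    have h : Q = Real.sqrt n ^ 2 + 2 * (ε * Real.sqrt n) + ε ^ 2 := by ring
    rw [h, hs2, hε2]; ring
  have hlast : (n - 1 - Q) / 2 = -(1 + ε * Real.sqrt n) := by
    rw [hQeq]; ring
  refine ⟨?_, hlast⟩
  have hC2 : Q * (d / 2 * (1 + (2 * d - n + 1) / Q)) = d * (Q + 2 * d - n + 1) / 2 := by
    field_simp; ring
  have hC3 : Q * ((d - n + 1) / 2 * (1 + (2 * d - n + 1) / Q) + d - 1) =
      (2 * d ^ 2 - 3 * d * (n - 1 - Q) + (n - 1) ^ 2 - (n + 1) * Q) / 2 := by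
    field_simp; ring
  clear_value Q
  clear_value n
  constructor
  · rintro ⟨-, h2, h3⟩
    have h2' := (mul_nonneg_iff_of_pos_left hQ0).mpr h2
    rw [hC2] at h2'
    have h3' := (mul_nonneg_iff_of_pos_left hQ0).mpr h3
    rw [hC3] at h3'
    constructor
    · nlinarith
    · linarith
  · rintro ⟨h1, h2⟩
    refine ⟨div_nonneg (sq_nonneg d) hQ0.le, ?_, ?_⟩
    · rw [← mul_nonneg_iff_of_pos_left hQ0, hC2]
      nlinarith
    · rw [← mul_nonneg_iff_of_pos_left hQ0, hC3]
      linarith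
end
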